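/- arXiv:1107.4532 — 5 statements merged into one kernel-verified Lean document; each statement's English description precedes it below -/
import Mathlib

section
/- Let C be a closed cone in a real Banach space X and let f : C → C be a continuous homogeneous order-preserving map. If there exist a > 0 and v ∈ C with v ≠ 0 such that a·v ≤ f(v), then a ≤ r_C(f). -/
open Filter Topology Set

noncomputable section

variable {X : Type*} [NormedAddCommGroup X] [NormedSpace ℝ X] [CompleteSpace X]

/-- `C` is a closed cone in `X`: closed, convex, invariant under nonnegative scaling,
and `C ∩ (-C) = {0}`. -/
def IsClosedCone (C : Set X) : Prop :=
  IsClosed C ∧ Convex ℝ C ∧ (∀ a : ℝ, 0 ≤ a → ∀ x ∈ C, a • x ∈ C) ∧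
    ∀ x ∈ C, -x ∈ C → x = 0

/-- The partial order induced by the cone `C`: `x ≤ y` iff `y - x ∈ C`. -/
def coneLE (C : Set X) (x y : X) : Prop := y - x ∈ C

/-- `f` is homogeneous of degree one on `C`. -/
def IsHomog (C : Set X) (f : X → X) : Prop :=
  ∀ a : ℝ, 0 ≤ a → ∀ x ∈ C, f (a • x) = a • f x

/-- `f` is order-preserving on `C` with respect to the cone order. -/
def IsOrdPres (C : Set X) (f : X → X) : Prop :=
  ∀ x ∈ C, ∀ y ∈ C, coneLE C x y → coneLE C (f x) (f y)

/-- The cone spectral radius `r_C(f) = sup_{x ∈ C} limsup_k ‖f^k(x)‖^{1/k}`. -/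
def coneSpecRad (C : Set X) (f : X → X) : ℝ :=
  sSup {r : ℝ | ∃ x ∈ C, r = Filter.limsup (fun k : ℕ => ‖f^[k] x‖ ^ ((k : ℝ)⁻¹)) Filter.atTop}

/-!
Iterating `a • v ≤ f v` with monotonicity and homogeneity gives `a ^ k • v ≤ f^[k] v`. As `C` is
closed and pointed, `-v` lies at positive distance `δ` from `C`, and `v ≤ w` forces `‖w‖ ≥ δ`;
hence `‖f^[k] v‖ ≥ a ^ k δ` and the limsup of the `k`-th roots at `v` is at least `a`.
Continuity at `0` and homogeneity give `‖f x‖ ≤ M ‖x‖` on `C`, so every limsup is at most `M`: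
without this bound the `sSup` defining `coneSpecRad` would be the junk value `0`.
-/

lemma tendsto_pow_mul_rpow_inv_natCast {M c : ℝ} (hM : 0 ≤ M) (hc : 0 < c) :
    Tendsto (fun k : ℕ => (M ^ k * c) ^ (k : ℝ)⁻¹) atTop (𝓝 M) := by
  have hinv : Tendsto (fun k : ℕ => (k : ℝ)⁻¹) atTop (𝓝 0) :=
    tendsto_inv_atTop_zero.comp tendsto_natCast_atTop_atTop
  have hroot : Tendsto (fun k : ℕ => c ^ (k : ℝ)⁻¹) atTop (𝓝 1) := by
    simpa [Function.comp_def] using (Real.continuousAt_const_rpow hc.ne').tendsto.comp hinv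
  refine (by simpa using hroot.const_mul M : Tendsto _ atTop (𝓝 M)).congr' ?_
  filter_upwards [eventually_ne_atTop 0] with k hk
  rw [Real.mul_rpow (by positivity) hc.le, Real.pow_rpow_inv_natCast hM hk]

section RootGrowth

variable {u : ℕ → ℝ} {M c : ℝ}

lemma isBoundedUnder_rpow_inv_of_le_pow_mul (hu0 : ∀ k, 0 ≤ u k) (hu : ∀ k, u k ≤ M ^ k * c)
    (hM : 0 ≤ M) (hc : 0 < c) :
    IsBoundedUnder (· ≤ ·) atTop (fun k : ℕ => u k ^ (k : ℝ)⁻¹) :=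
  (tendsto_pow_mul_rpow_inv_natCast hM hc).isBoundedUnder_le.mono_le
    (Eventually.of_forall fun k => Real.rpow_le_rpow (hu0 k) (hu k) (by positivity))

lemma limsup_rpow_inv_le_of_le_pow_mul (hu0 : ∀ k, 0 ≤ u k) (hu : ∀ k, u k ≤ M ^ k * c)
    (hM : 0 ≤ M) (hc : 0 < c) :
    limsup (fun k : ℕ => u k ^ (k : ℝ)⁻¹) atTop ≤ M :=
  (limsup_le_limsup
    (Eventually.of_forall fun k => Real.rpow_le_rpow (hu0 k) (hu k) (by positivity))
    (isCoboundedUnder_le_of_le atTop fun k => Real.rpow_nonneg (hu0 k) _)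
    (tendsto_pow_mul_rpow_inv_natCast hM hc).isBoundedUnder_le).trans
  (tendsto_pow_mul_rpow_inv_natCast hM hc).limsup_eq.le

lemma le_limsup_rpow_inv_of_pow_mul_le {a : ℝ} (ha : 0 ≤ a) (hc : 0 < c)
    (hu : ∀ k, a ^ k * c ≤ u k)
    (hbdd : IsBoundedUnder (· ≤ ·) atTop (fun k : ℕ => u k ^ (k : ℝ)⁻¹)) :
    a ≤ limsup (fun k : ℕ => u k ^ (k : ℝ)⁻¹) atTop :=
  (tendsto_pow_mul_rpow_inv_natCast ha hc).limsup_eq.symm.le.trans <|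
    limsup_le_limsup
      (Eventually.of_forall fun k => Real.rpow_le_rpow (by positivity) (hu k) (by positivity))
      (tendsto_pow_mul_rpow_inv_natCast ha hc).isCoboundedUnder_le hbdd

end RootGrowth

lemma norm_iterate_le_pow_mul {E : Type*} [SeminormedAddGroup E] {C : Set E} {f : E → E} {M : ℝ}
    (hfC : MapsTo f C C) (hM : 0 ≤ M) (hf : ∀ x ∈ C, ‖f x‖ ≤ M * ‖x‖) {x : E} (hx : x ∈ C) :
    ∀ k : ℕ, ‖f^[k] x‖ ≤ M ^ k * ‖x‖
  | 0 => by simp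
  | k + 1 => by
    rw [Function.iterate_succ_apply', pow_succ', mul_assoc]
    exact (hf _ (hfC.iterate k hx)).trans
      (mul_le_mul_of_nonneg_left (norm_iterate_le_pow_mul hfC hM hf hx k) hM)

section Cone

variable {E : Type*} [NormedAddCommGroup E]

lemma infDist_neg_le_norm_of_coneLE {C : Set E} {v w : E} (h : coneLE C v w) :
    Metric.infDist (-v) C ≤ ‖w‖ :=
  (Metric.infDist_le_dist_of_mem h).trans_eq <| by
    rw [dist_eq_norm, ← norm_neg, neg_sub, sub_neg_eq_add, sub_add_cancel]

lemma limsup_le_coneSpecRad {C : Set E} {f : E → E} {M : ℝ}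
    (hM : ∀ x ∈ C, limsup (fun k : ℕ => ‖f^[k] x‖ ^ (k : ℝ)⁻¹) atTop ≤ M) {x : E} (hx : x ∈ C) :
    limsup (fun k : ℕ => ‖f^[k] x‖ ^ (k : ℝ)⁻¹) atTop ≤ coneSpecRad C f :=
  le_csSup ⟨M, by rintro _ ⟨y, hy, rfl⟩; exact hM y hy⟩ ⟨x, hx, rfl⟩

variable [NormedSpace ℝ E] {C : Set E}

namespace IsClosedCone

lemma smul_mem (hC : IsClosedCone C) {t : ℝ} (ht : 0 ≤ t) {x : E} (hx : x ∈ C) : t • x ∈ C :=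
  hC.2.2.1 t ht x hx

lemma zero_mem (hC : IsClosedCone C) {x : E} (hx : x ∈ C) : (0 : E) ∈ C := by
  simpa using hC.smul_mem le_rfl hx

lemma add_mem (hC : IsClosedCone C) {x y : E} (hx : x ∈ C) (hy : y ∈ C) : x + y ∈ C := by
  have hmid : (1 / 2 : ℝ) • x + (1 / 2 : ℝ) • y ∈ C :=
    hC.2.1 hx hy (by norm_num) (by norm_num) (by norm_num)
  simpa [smul_add, smul_smul] using hC.smul_mem (by norm_num : (0 : ℝ) ≤ 2) hmid

lemma coneLE_trans (hC : IsClosedCone C) {x y z : E} (hxy : coneLE C x y)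
    (hyz : coneLE C y z) : coneLE C x z := by
  simpa [coneLE] using hC.add_mem hyz hxy

lemma coneLE_smul (hC : IsClosedCone C) {t : ℝ} (ht : 0 ≤ t) {x y : E} (h : coneLE C x y) :
    coneLE C (t • x) (t • y) := by
  simpa [coneLE, smul_sub] using hC.smul_mem ht h

lemma infDist_neg_pos (hC : IsClosedCone C) {v : E} (hv : v ∈ C) (hv0 : v ≠ 0) :
    0 < Metric.infDist (-v) C :=
  (hC.1.notMem_iff_infDist_pos ⟨v, hv⟩).1 fun hnv => hv0 (hC.2.2.2 v hv hnv)

lemma mul_infDist_neg_le_norm_of_coneLE_smul (hC : IsClosedCone C) {t : ℝ} (ht : 0 < t) {v w : E}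
    (h : coneLE C (t • v) w) : t * Metric.infDist (-v) C ≤ ‖w‖ := by
  have hle : coneLE C v (t⁻¹ • w) := by
    simpa [smul_smul, ht.ne'] using hC.coneLE_smul (inv_nonneg.2 ht.le) h
  have := infDist_neg_le_norm_of_coneLE hle
  rw [norm_smul, Real.norm_of_nonneg (inv_nonneg.2 ht.le)] at this
  exact (le_inv_mul_iff₀ ht).1 this

end IsClosedCone

variable {f : E → E}

lemma IsHomog.exists_norm_le_mul_norm (hhom : IsHomog C f)
    (hsmul : ∀ t : ℝ, 0 ≤ t → ∀ x ∈ C, t • x ∈ C) (h0 : (0 : E) ∈ C)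
    (hcont : ContinuousWithinAt f C 0) : ∃ M, 0 ≤ M ∧ ∀ x ∈ C, ‖f x‖ ≤ M * ‖x‖ := by
  have hf0 : f 0 = 0 := by simpa using hhom 0 le_rfl 0 h0
  obtain ⟨δ, hδ, hball⟩ := Metric.continuousWithinAt_iff.1 hcont 1 one_pos
  refine ⟨2 / δ, by positivity, fun x hx => ?_⟩
  rcases eq_or_ne x 0 with rfl | hx0
  · simp [hf0]
  -- `x = t • y` with `‖y‖ = δ / 2`, so that `‖f y‖ < 1`
  set t : ℝ := 2 * ‖x‖ / δ
  have hxpos : 0 < ‖x‖ := norm_pos_iff.2 hx0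
  have ht : 0 < t := by positivity
  have hy : t⁻¹ • x ∈ C := hsmul _ (inv_nonneg.2 ht.le) x hx
  have hfy : ‖f (t⁻¹ • x)‖ < 1 := by
    have hyδ : dist (t⁻¹ • x) 0 < δ := by
      rw [dist_zero_right, norm_smul, Real.norm_of_nonneg (inv_nonneg.2 ht.le),
        inv_mul_lt_iff₀ ht]
      simp only [t]
      field_simp
      linarith
    simpa [hf0] using hball hy hyδ
  calc ‖f x‖ = t * ‖f (t⁻¹ • x)‖ := by
        rw [hhom _ (inv_nonneg.2 ht.le) x hx, norm_smul, Real.norm_of_nonneg (inv_nonneg.2 ht.le),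
          ← mul_assoc, mul_inv_cancel₀ ht.ne', one_mul]
    _ ≤ t := mul_le_of_le_one_right ht.le hfy.le
    _ = 2 / δ * ‖x‖ := by ring

lemma coneLE_pow_smul_iterate (hC : IsClosedCone C) (hfC : MapsTo f C C) (hhom : IsHomog C f)
    (hord : IsOrdPres C f) {a : ℝ} (ha : 0 ≤ a) {v : E} (hv : v ∈ C)
    (h : coneLE C (a • v) (f v)) : ∀ k : ℕ, coneLE C (a ^ k • v) (f^[k] v)
  | 0 => by simpa [coneLE] using hC.zero_mem hv
  | k + 1 => by
    rw [Function.iterate_succ_apply', pow_succ, mul_smul]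
    refine hC.coneLE_trans (hC.coneLE_smul (pow_nonneg ha k) h) ?_
    rw [← hhom _ (pow_nonneg ha k) v hv]
    exact hord _ (hC.smul_mem (pow_nonneg ha k) hv) _ (hfC.iterate k hv)
      (coneLE_pow_smul_iterate hC hfC hhom hord ha hv h k)

end Cone

/-- If `f : C → C` is a continuous homogeneous order-preserving map on a closed cone `C`
and `a • v ≤ f v` for some `a > 0` and `v ∈ C \ {0}`, then `a ≤ r_C(f)`. -/
theorem le_coneSpecRad_of_coneLE_smul
    (C : Set X) (hC : IsClosedCone C) (f : X → X)
    (hfC : Set.MapsTo f C C) (hcont : ContinuousOn f C)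
    (hhom : IsHomog C f) (hord : IsOrdPres C f)
    (a : ℝ) (ha : 0 < a) (v : X) (hv : v ∈ C) (hv0 : v ≠ 0)
    (h : coneLE C (a • v) (f v)) :
    a ≤ coneSpecRad C f := by
  have h0 : (0 : X) ∈ C := hC.zero_mem hv
  obtain ⟨M, hM, hfM⟩ := hhom.exists_norm_le_mul_norm hC.2.2.1 h0 (hcont 0 h0)
  -- the `+ 1` keeps the constant positive at `x = 0`
  have hupper (x : X) (hx : x ∈ C) (k : ℕ) : ‖f^[k] x‖ ≤ M ^ k * (‖x‖ + 1) :=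
    (norm_iterate_le_pow_mul hfC hM hfM hx k).trans (by gcongr; linarith)
  have hlower (k : ℕ) : a ^ k * Metric.infDist (-v) C ≤ ‖f^[k] v‖ :=
    hC.mul_infDist_neg_le_norm_of_coneLE_smul (pow_pos ha k)
      (coneLE_pow_smul_iterate hC hfC hhom hord ha.le hv h k)
  calc a ≤ limsup (fun k : ℕ => ‖f^[k] v‖ ^ (k : ℝ)⁻¹) atTop :=
        le_limsup_rpow_inv_of_pow_mul_le ha.le (hC.infDist_neg_pos hv hv0) hlower
          (isBoundedUnder_rpow_inv_of_le_pow_mul (fun _ => norm_nonneg _) (hupper v hv) hM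
            (by positivity))
    _ ≤ coneSpecRad C f :=
        limsup_le_coneSpecRad (fun x hx => limsup_rpow_inv_le_of_le_pow_mul
          (fun _ => norm_nonneg _) (hupper x hx) hM (by positivity)) hv
end
end

section
/- Let C be a closed cone in a real Banach space X, let f : C → C be a continuous compact homogeneous order-preserving map, and for each k ≥ 1 let f_k : C → C be a continuous compact homogeneous order-preserving map with ‖f − f_k‖_C → 0 as k → ∞. Then limsup_{k→∞} r_C(f_k) ≤ r_C(f). -/
/-!
For every `m ≥ 1`, a homogeneous map `g` of the cone satisfies `r_C(g) ≤ ‖g^m‖_C^{1/m}`, and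
`f_k^m → f^m` uniformly on the unit ball of `C`, because `f^m` is uniformly continuous near the
compact set `closure (f (C ∩ B))`. Hence `(limsup_k r_C(f_k))^m ≤ ‖f^m‖_C` for all `m ≥ 1`.

It remains to see that `q^m ≤ ‖f^m‖_C` for all `m ≥ 1` forces `q ≤ r_C(f)`. Given `q' < q`, take
`x` in the unit ball with `‖f^n x‖` much larger than `q'^n`; after the index `j` minimising
`‖f^j x‖ / q'^j` the orbit grows at rate `q'` for a long time. Normalising `f^(j+1) x` puts a point
with this property in the fixed compact set `q'⁻¹ • closure (f (C ∩ B))`, and a limit point of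
such points has `‖f^i z‖ ≥ q'^i` for all `i`, so `r_C(f) ≥ q'`.
-/

open Filter Topology Set

noncomputable section

variable {X : Type*} [NormedAddCommGroup X] [NormedSpace ℝ X] [CompleteSpace X]

/-- `f` is a compact map on `C`: the image of every bounded subset of `C`
has compact closure. -/
def IsCompactMapOn (C : Set X) (f : X → X) : Prop :=
  ∀ D : Set X, D ⊆ C → Bornology.IsBounded D → IsCompact (closure (f '' D))

/-- The cone sup-norm `‖g‖_C = sup {‖g x‖ : x ∈ C, ‖x‖ ≤ 1}`. -/
def coneNorm (C : Set X) (g : X → X) : ℝ :=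
  sSup {r : ℝ | ∃ x ∈ C, ‖x‖ ≤ 1 ∧ r = ‖g x‖}

/-- The cone spectrum `σ_C(f) = {ρ ≥ 0 : f x = ρ • x for some x ∈ C, x ≠ 0}`. -/
def coneSpectrum (C : Set X) (f : X → X) : Set ℝ :=
  {ρ : ℝ | 0 ≤ ρ ∧ ∃ x ∈ C, x ≠ 0 ∧ f x = ρ • x}

/-- `f` has a continuous cone spectral radius: for every sequence of continuous compact
order-preserving homogeneous maps `f_k : C → C` with `‖f - f_k‖_C → 0`,
one has `r_C(f_k) → r_C(f)`. -/
def HasContinuousConeSpecRad (C : Set X) (f : X → X) : Prop :=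
  ∀ fk : ℕ → X → X,
    (∀ k, Set.MapsTo (fk k) C C) →
    (∀ k, ContinuousOn (fk k) C) →
    (∀ k, IsCompactMapOn C (fk k)) →
    (∀ k, IsHomog C (fk k)) →
    (∀ k, IsOrdPres C (fk k)) →
    Filter.Tendsto (fun k => coneNorm C (fun x => f x - fk k x)) Filter.atTop (nhds 0) →
    Filter.Tendsto (fun k => coneSpecRad C (fk k)) Filter.atTop (nhds (coneSpecRad C f))

open Metric
open scoped Pointwise

section RpowInv

variable {u : ℕ → ℝ} {A D : ℝ}

theorem tendsto_rpow_inv_natCast_mul (hD : 0 < D) (A : ℝ) :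
    Tendsto (fun n : ℕ => D ^ (n : ℝ)⁻¹ * A) atTop (𝓝 A) := by
  have h : Tendsto (fun n : ℕ => D ^ (n : ℝ)⁻¹) atTop (𝓝 1) := by
    have := (Real.continuousAt_const_rpow (b := 0) hD.ne').tendsto.comp
      (tendsto_inv_atTop_zero.comp tendsto_natCast_atTop_atTop)
    rwa [Real.rpow_zero] at this
  simpa using h.mul_const A

theorem eventually_rpow_inv_le (hu : ∀ n, 0 ≤ u n) (hA : 0 ≤ A) (h : ∀ n, u n ≤ D * A ^ n) :
    ∀ᶠ n : ℕ in atTop, u n ^ (n : ℝ)⁻¹ ≤ max D 1 ^ (n : ℝ)⁻¹ * A := by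
  filter_upwards [eventually_ne_atTop 0] with n hn
  calc u n ^ (n : ℝ)⁻¹ ≤ (max D 1 * A ^ n) ^ (n : ℝ)⁻¹ := by
        refine Real.rpow_le_rpow (hu n) ((h n).trans ?_) (by positivity)
        exact mul_le_mul_of_nonneg_right (le_max_left _ _) (by positivity)
    _ = max D 1 ^ (n : ℝ)⁻¹ * A := by
        rw [Real.mul_rpow (by positivity) (by positivity), Real.pow_rpow_inv_natCast hA hn]

theorem limsup_rpow_inv_le (hu : ∀ n, 0 ≤ u n) (hA : 0 ≤ A) (h : ∀ n, u n ≤ D * A ^ n) :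
    limsup (fun n : ℕ => u n ^ (n : ℝ)⁻¹) atTop ≤ A := by
  have hlim := tendsto_rpow_inv_natCast_mul (D := max D 1) (lt_max_of_lt_right one_pos) A
  exact (limsup_le_limsup (eventually_rpow_inv_le hu hA h)
    (isCoboundedUnder_le_of_le atTop fun n => Real.rpow_nonneg (hu n) _)
    hlim.isBoundedUnder_le).trans_eq hlim.limsup_eq

theorem isBoundedUnder_rpow_inv (hu : ∀ n, 0 ≤ u n) (hA : 0 ≤ A) (h : ∀ n, u n ≤ D * A ^ n) :
    IsBoundedUnder (· ≤ ·) atTop (fun n : ℕ => u n ^ (n : ℝ)⁻¹) :=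
  (tendsto_rpow_inv_natCast_mul (lt_max_of_lt_right one_pos) A).isBoundedUnder_le.mono_le
    (eventually_rpow_inv_le hu hA h)

theorem le_limsup_rpow_inv {q : ℝ} (hq : 0 ≤ q) (hqu : ∀ᶠ n in atTop, q ^ n ≤ u n)
    (hbdd : IsBoundedUnder (· ≤ ·) atTop (fun n : ℕ => u n ^ (n : ℝ)⁻¹)) :
    q ≤ limsup (fun n : ℕ => u n ^ (n : ℝ)⁻¹) atTop := by
  refine le_limsup_of_frequently_le (Eventually.frequently ?_) hbdd
  filter_upwards [hqu, eventually_ne_atTop 0] with n hn hn0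
  calc q = (q ^ n) ^ (n : ℝ)⁻¹ := (Real.pow_rpow_inv_natCast hq hn0).symm
    _ ≤ u n ^ (n : ℝ)⁻¹ := Real.rpow_le_rpow (by positivity) hn (by positivity)

end RpowInv

theorem pow_le_max_one_pow {x : ℝ} (hx : 0 ≤ x) {k m : ℕ} (hkm : k ≤ m) :
    x ^ k ≤ max 1 x ^ m :=
  (pow_le_pow_left₀ hx (le_max_right 1 x) k).trans (pow_le_pow_right₀ (le_max_left 1 x) hkm)

/-- `j` minimises `a j / q ^ j` over `j ≤ n`. A window of length at most `m` after `j` could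
only gain the factor `max 1 (M / q) ^ m` over `q ^ n`, so the window is longer. -/
theorem exists_pos_forall_pow_mul_le {a : ℕ → ℝ} {M q : ℝ} (hM : 0 ≤ M) (hq : 0 < q)
    (ha : ∀ j i, a (j + i) ≤ M ^ i * a j) (ha0 : a 0 ≤ 1) {m n : ℕ}
    (hn : max 1 (M / q) ^ m * q ^ n < a n) :
    ∃ j, 0 < a j ∧ ∀ i ≤ m + 1, q ^ i * a j ≤ a (j + i) := by
  obtain ⟨j, hj, hmin⟩ :=
    (Finset.range (n + 1)).exists_min_image (fun j => a j / q ^ j) ⟨0, by simp⟩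
  simp only [Finset.mem_range, Nat.lt_succ_iff] at hj hmin
  have hgrow : ∀ i, j + i ≤ n → q ^ i * a j ≤ a (j + i) := by
    intro i hi
    have h := hmin (j + i) hi
    rw [div_le_div_iff₀ (by positivity) (by positivity), pow_add] at h
    exact le_of_mul_le_mul_right (by linarith : q ^ i * a j * q ^ j ≤ a (j + i) * q ^ j)
      (by positivity)
  have hj1 : a j ≤ q ^ j := by
    have h := hmin 0 (Nat.zero_le n)
    rw [pow_zero, div_one, div_le_iff₀ (by positivity)] at h
    exact h.trans (mul_le_of_le_one_left (by positivity) ha0)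
  have hnj : a n ≤ M ^ (n - j) * a j := by simpa [Nat.add_sub_cancel' hj] using ha j (n - j)
  have hpos : 0 < a j := by
    have han : 0 < a n := lt_of_le_of_lt (by positivity) hn
    by_contra! h
    linarith [mul_nonpos_of_nonneg_of_nonpos (pow_nonneg hM (n - j)) h]
  have hlong : m + 1 ≤ n - j := by
    by_contra! h
    have hqn : q ^ n = q ^ (n - j) * q ^ j := by rw [← pow_add, Nat.sub_add_cancel hj]
    have : a n ≤ max 1 (M / q) ^ m * q ^ n :=
      calc a n ≤ M ^ (n - j) * q ^ j := hnj.trans (by gcongr)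
        _ = (M / q) ^ (n - j) * q ^ n := by rw [hqn, div_pow]; field_simp
        _ ≤ max 1 (M / q) ^ m * q ^ n := by
          gcongr
          exact pow_le_max_one_pow (by positivity) (by omega)
    linarith
  exact ⟨j, hpos, fun i hi => hgrow i (by omega)⟩

theorem IsCompact.exists_forall_dist_lt_of_continuousOn {α β : Type*} [PseudoMetricSpace α]
    [PseudoMetricSpace β] {s K : Set α} {f : α → β} (hK : IsCompact K) (hKs : K ⊆ s)
    (hf : ContinuousOn f s) {ε : ℝ} (hε : 0 < ε) :
    ∃ δ > 0, ∀ x ∈ K, ∀ y ∈ s, dist x y < δ → dist (f x) (f y) < ε := by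
  have hK' : IsCompact (((↑) : s → α) ⁻¹' K) := by
    rwa [Subtype.isCompact_iff, Subtype.image_preimage_coe, inter_eq_right.2 hKs]
  obtain ⟨δ, hδ, h⟩ := mem_uniformity_dist.1 <|
    hK'.uniformContinuousAt_of_continuousAt (s.domRestrict f)
      (fun _ _ => hf.domRestrict.continuousAt) (dist_mem_uniformity hε)
  exact ⟨δ, hδ, fun x hx y hy hxy => h (a := ⟨x, hKs hx⟩) (b := ⟨y, hy⟩) hxy hx⟩

section ConeMaps

variable {E : Type*} [NormedAddCommGroup E] {C : Set E} {f g : E → E}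

theorem IsCompactMapOn.exists_norm_le (hg : IsCompactMapOn C g) (R : ℝ) :
    ∃ B, ∀ x ∈ C, ‖x‖ ≤ R → ‖g x‖ ≤ B := by
  obtain ⟨B, hB⟩ :=
    (hg _ inter_subset_left (isBounded_closedBall.subset inter_subset_right)).isBounded
      |>.exists_norm_le
  exact ⟨B, fun x hx hxR =>
    hB _ (subset_closure ⟨x, ⟨hx, mem_closedBall_zero_iff.2 hxR⟩, rfl⟩)⟩

theorem coneNorm_nonneg : 0 ≤ coneNorm C g :=
  Real.sSup_nonneg (by rintro _ ⟨x, -, -, rfl⟩; exact norm_nonneg _)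

theorem norm_le_coneNorm {B : ℝ} (hB : ∀ x ∈ C, ‖x‖ ≤ 1 → ‖g x‖ ≤ B) {x : E} (hx : x ∈ C)
    (hx1 : ‖x‖ ≤ 1) : ‖g x‖ ≤ coneNorm C g :=
  le_csSup ⟨B, by rintro _ ⟨y, hy, hy1, rfl⟩; exact hB y hy hy1⟩ ⟨x, hx, hx1, rfl⟩

theorem exists_lt_norm_of_lt_coneNorm {c : ℝ} (hc : 0 ≤ c) (h : c < coneNorm C g) :
    ∃ x ∈ C, ‖x‖ ≤ 1 ∧ c < ‖g x‖ := by
  have hne : {r : ℝ | ∃ x ∈ C, ‖x‖ ≤ 1 ∧ r = ‖g x‖}.Nonempty := by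
    by_contra hemp
    rw [not_nonempty_iff_eq_empty] at hemp
    rw [coneNorm, hemp, Real.sSup_empty] at h
    exact h.not_ge hc
  obtain ⟨_, ⟨x, hx, hx1, rfl⟩, hlt⟩ := exists_lt_of_lt_csSup hne h
  exact ⟨x, hx, hx1, hlt⟩

theorem norm_iterate_le_pow_mul_s1 (hgC : MapsTo g C C) {M : ℝ} (hM : 0 ≤ M)
    (h : ∀ x ∈ C, ‖g x‖ ≤ M * ‖x‖) (n : ℕ) {x : E} (hx : x ∈ C) :
    ‖g^[n] x‖ ≤ M ^ n * ‖x‖ := by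
  induction n with
  | zero => simp
  | succ n ih =>
    rw [Function.iterate_succ_apply', pow_succ', mul_assoc]
    exact (h _ (hgC.iterate n hx)).trans (mul_le_mul_of_nonneg_left ih hM)

theorem norm_iterate_le_of_norm_iterate_le (hgC : MapsTo g C C) {M : ℝ} (hM : 0 ≤ M)
    (h : ∀ x ∈ C, ‖g x‖ ≤ M * ‖x‖) {m : ℕ} (hm : m ≠ 0) {A : ℝ} (hA : 0 < A)
    (hAm : ∀ x ∈ C, ‖g^[m] x‖ ≤ A ^ m * ‖x‖) (n : ℕ) {x : E} (hx : x ∈ C) :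
    ‖g^[n] x‖ ≤ max 1 (M / A) ^ m * ‖x‖ * A ^ n := by
  induction n using Nat.strong_induction_on generalizing x with
  | _ n ih =>
  rcases lt_or_ge n m with hnm | hmn
  · calc ‖g^[n] x‖ ≤ M ^ n * ‖x‖ := norm_iterate_le_pow_mul_s1 hgC hM h n hx
      _ = (M / A) ^ n * ‖x‖ * A ^ n := by rw [div_pow]; field_simp
      _ ≤ max 1 (M / A) ^ m * ‖x‖ * A ^ n := by
        gcongr
        exact pow_le_max_one_pow (by positivity) hnm.le
  · obtain ⟨k, rfl⟩ := Nat.exists_eq_add_of_le' hmn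
    rw [Function.iterate_add_apply]
    calc ‖g^[k] (g^[m] x)‖ ≤ max 1 (M / A) ^ m * ‖g^[m] x‖ * A ^ k :=
          ih k (by omega) (hgC.iterate m hx)
      _ ≤ max 1 (M / A) ^ m * (A ^ m * ‖x‖) * A ^ k := by gcongr; exact hAm x hx
      _ = max 1 (M / A) ^ m * ‖x‖ * A ^ (k + m) := by ring

theorem norm_iterate_le_coneNorm (hgC : MapsTo g C C) {M : ℝ} (hM : 0 ≤ M)
    (h : ∀ x ∈ C, ‖g x‖ ≤ M * ‖x‖) (n : ℕ) {x : E} (hx : x ∈ C) (hx1 : ‖x‖ ≤ 1) :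
    ‖g^[n] x‖ ≤ coneNorm C g^[n] :=
  norm_le_coneNorm (fun y hy hy1 => (norm_iterate_le_pow_mul_s1 hgC hM h n hy).trans
    (mul_le_of_le_one_right (by positivity) hy1)) hx hx1

theorem limsup_norm_iterate_rpow_inv_le (hgC : MapsTo g C C) {M : ℝ} (hM : 0 ≤ M)
    (h : ∀ x ∈ C, ‖g x‖ ≤ M * ‖x‖) {x : E} (hx : x ∈ C) :
    limsup (fun n : ℕ => ‖g^[n] x‖ ^ (n : ℝ)⁻¹) atTop ≤ M :=
  limsup_rpow_inv_le (fun _ => norm_nonneg _) hM (D := ‖x‖) fun n => by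
    rw [mul_comm]; exact norm_iterate_le_pow_mul_s1 hgC hM h n hx

theorem isBoundedUnder_norm_iterate_rpow_inv (hgC : MapsTo g C C) {M : ℝ} (hM : 0 ≤ M)
    (h : ∀ x ∈ C, ‖g x‖ ≤ M * ‖x‖) {x : E} (hx : x ∈ C) :
    IsBoundedUnder (· ≤ ·) atTop (fun n : ℕ => ‖g^[n] x‖ ^ (n : ℝ)⁻¹) :=
  isBoundedUnder_rpow_inv (fun _ => norm_nonneg _) hM (D := ‖x‖) fun n => by
    rw [mul_comm]; exact norm_iterate_le_pow_mul_s1 hgC hM h n hx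

theorem le_coneSpecRad (hgC : MapsTo g C C) {M : ℝ} (hM : 0 ≤ M)
    (h : ∀ x ∈ C, ‖g x‖ ≤ M * ‖x‖) {x : E} (hx : x ∈ C) :
    limsup (fun n : ℕ => ‖g^[n] x‖ ^ (n : ℝ)⁻¹) atTop ≤ coneSpecRad C g :=
  le_csSup ⟨M, by rintro _ ⟨y, hy, rfl⟩; exact limsup_norm_iterate_rpow_inv_le hgC hM h hy⟩
    ⟨x, hx, rfl⟩

theorem coneSpecRad_nonneg (hgC : MapsTo g C C) {M : ℝ} (hM : 0 ≤ M)
    (h : ∀ x ∈ C, ‖g x‖ ≤ M * ‖x‖) : 0 ≤ coneSpecRad C g := by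
  refine Real.sSup_nonneg ?_
  rintro _ ⟨x, hx, rfl⟩
  refine le_limsup_rpow_inv le_rfl ?_ (isBoundedUnder_norm_iterate_rpow_inv hgC hM h hx)
  filter_upwards [eventually_ne_atTop 0] with n hn
  rw [zero_pow hn]
  exact norm_nonneg _

theorem exists_forall_pow_le_norm_iterate (hfC : MapsTo f C C) (hfcont : ContinuousOn f C)
    {K : Set E} (hK : IsCompact K) (hKC : K ⊆ C) {q : ℝ}
    (h : ∀ m, ∃ y ∈ K, ∀ i ≤ m, q ^ i ≤ ‖f^[i] y‖) : ∃ z ∈ C, ∀ i, q ^ i ≤ ‖f^[i] z‖ := by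
  choose y hyK hy using h
  obtain ⟨z, hzK, φ, hφ, hlim⟩ := hK.tendsto_subseq hyK
  refine ⟨z, hKC hzK, fun i => ?_⟩
  have hcont : Tendsto (fun l => f^[i] (y (φ l))) atTop (𝓝 (f^[i] z)) :=
    ((hfcont.iterate hfC i) z (hKC hzK)).tendsto.comp
      (tendsto_nhdsWithin_iff.2 ⟨hlim, Eventually.of_forall fun l => hKC (hyK _)⟩)
  exact ge_of_tendsto hcont.norm
    ((eventually_ge_atTop i).mono fun l hl => hy _ _ (hl.trans hφ.le_apply))

/-- `f^[n]` is uniformly continuous near the compact set `closure (f '' (C ∩ closedBall 0 R))`,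
which contains `f x` for `‖x‖ ≤ R`; this controls `f^[n] (f x) - f^[n] (F i x)`. -/
theorem tendstoUniformlyOn_iterate (hCc : IsClosed C) (hfC : MapsTo f C C)
    (hfcont : ContinuousOn f C) (hfcomp : IsCompactMapOn C f) {ι : Type*} {p : Filter ι}
    {F : ι → E → E} (hFC : ∀ i, MapsTo (F i) C C)
    (hF : ∀ R, TendstoUniformlyOn F f p (C ∩ closedBall 0 R)) (n : ℕ) (R : ℝ) :
    TendstoUniformlyOn (fun i => (F i)^[n]) f^[n] p (C ∩ closedBall 0 R) := by
  induction n generalizing R with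
  | zero => exact Metric.tendstoUniformlyOn_iff.2 fun ε hε =>
      Eventually.of_forall fun x _ => by simp [hε]
  | succ n ih =>
    rw [Metric.tendstoUniformlyOn_iff]
    intro ε hε
    have hK : IsCompact (closure (f '' (C ∩ closedBall 0 R))) :=
      hfcomp _ inter_subset_left (isBounded_closedBall.subset inter_subset_right)
    have hKC : closure (f '' (C ∩ closedBall 0 R)) ⊆ C :=
      closure_minimal (image_subset_iff.2 fun x hx => hfC hx.1) hCc
    obtain ⟨δ, hδ, hfn⟩ :=
      hK.exists_forall_dist_lt_of_continuousOn hKC (hfcont.iterate hfC n) (half_pos hε)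
    obtain ⟨B, hB⟩ := hfcomp.exists_norm_le R
    filter_upwards [Metric.tendstoUniformlyOn_iff.1 (hF R) (min δ 1) (by positivity),
      Metric.tendstoUniformlyOn_iff.1 (ih (B + 1)) (ε / 2) (half_pos hε)] with i hFi hFni x hx
    have hdist := hFi x hx
    have hFx : F i x ∈ C ∩ closedBall 0 (B + 1) := by
      refine ⟨hFC i hx.1, mem_closedBall_zero_iff.2 ?_⟩
      calc ‖F i x‖ ≤ ‖f x‖ + 1 := norm_le_norm_add_const_of_dist_le <| by
            rw [dist_comm]; exact hdist.le.trans (min_le_right _ _)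
        _ ≤ B + 1 := by gcongr; exact hB x hx.1 (mem_closedBall_zero_iff.1 hx.2)
    rw [Function.iterate_succ_apply, Function.iterate_succ_apply]
    calc dist (f^[n] (f x)) ((F i)^[n] (F i x))
        ≤ dist (f^[n] (f x)) (f^[n] (F i x)) + dist (f^[n] (F i x)) ((F i)^[n] (F i x)) :=
          dist_triangle _ _ _
      _ < ε / 2 + ε / 2 := add_lt_add
          (hfn _ (subset_closure (mem_image_of_mem f hx)) _ hFx.1
            (hdist.trans_le (min_le_left _ _)))
          (hFni _ hFx)
      _ = ε := add_halves ε

variable [NormedSpace ℝ E]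

theorem IsHomog.map_zero (hg : IsHomog C g) (h0 : (0 : E) ∈ C) : g 0 = 0 := by
  simpa using hg 0 le_rfl 0 h0

theorem IsHomog.iterate (hg : IsHomog C g) (hgC : MapsTo g C C) (n : ℕ) :
    IsHomog C g^[n] := by
  induction n with
  | zero => intro a _ x _; rfl
  | succ n ih =>
    intro a ha x hx
    rw [Function.iterate_succ_apply', Function.iterate_succ_apply', ih a ha x hx,
      hg a ha _ (hgC.iterate n hx)]

theorem IsHomog.sub (hf : IsHomog C f) (hg : IsHomog C g) : IsHomog C (fun x => f x - g x) :=
  fun a ha x hx => by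
    show f (a • x) - g (a • x) = _
    rw [hf a ha x hx, hg a ha x hx, smul_sub]

theorem IsHomog.norm_le_mul (hC : IsClosedCone C) (hg : IsHomog C g) {B : ℝ}
    (hB : ∀ x ∈ C, ‖x‖ ≤ 1 → ‖g x‖ ≤ B) {x : E} (hx : x ∈ C) : ‖g x‖ ≤ B * ‖x‖ := by
  rcases eq_or_ne x 0 with rfl | hx0
  · simp [hg.map_zero hx]
  have hxn : 0 < ‖x‖ := norm_pos_iff.2 hx0
  have hu : ‖x‖⁻¹ • x ∈ C := hC.2.2.1 _ (inv_nonneg.2 hxn.le) x hx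
  have hgx : g x = ‖x‖ • g (‖x‖⁻¹ • x) := by
    rw [← hg _ hxn.le _ hu, smul_inv_smul₀ hxn.ne']
  rw [hgx, norm_smul, norm_norm, mul_comm]
  refine mul_le_mul_of_nonneg_right (hB _ hu ?_) hxn.le
  rw [norm_smul, norm_inv, norm_norm, inv_mul_cancel₀ hxn.ne']

theorem IsCompactMapOn.exists_norm_le_mul (hC : IsClosedCone C) (hg : IsCompactMapOn C g)
    (hhom : IsHomog C g) : ∃ M, 0 ≤ M ∧ ∀ x ∈ C, ‖g x‖ ≤ M * ‖x‖ := by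
  obtain ⟨B, hB⟩ := hg.exists_norm_le 1
  exact ⟨max B 0, le_max_right _ _, fun x hx =>
    hhom.norm_le_mul hC (fun y hy hy1 => (hB y hy hy1).trans (le_max_left _ _)) hx⟩

theorem coneSpecRad_le_rpow_of_norm_iterate_le (hC : IsClosedCone C) (hgC : MapsTo g C C)
    (hghom : IsHomog C g) {M : ℝ} (hM : 0 ≤ M) (h : ∀ x ∈ C, ‖g x‖ ≤ M * ‖x‖) {m : ℕ}
    (hm : m ≠ 0) {B : ℝ} (hB : 0 < B) (hBm : ∀ x ∈ C, ‖x‖ ≤ 1 → ‖g^[m] x‖ ≤ B) :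
    coneSpecRad C g ≤ B ^ (m : ℝ)⁻¹ := by
  have hA : 0 < B ^ (m : ℝ)⁻¹ := Real.rpow_pos_of_pos hB _
  have hAm : ∀ x ∈ C, ‖g^[m] x‖ ≤ (B ^ (m : ℝ)⁻¹) ^ m * ‖x‖ := fun x hx => by
    rw [Real.rpow_inv_natCast_pow hB.le hm]
    exact (hghom.iterate hgC m).norm_le_mul hC hBm hx
  refine Real.sSup_le ?_ hA.le
  rintro _ ⟨x, hx, rfl⟩
  exact limsup_rpow_inv_le (fun _ => norm_nonneg _) hA.le
    (norm_iterate_le_of_norm_iterate_le hgC hM h hm hA hAm · hx)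

theorem exists_mem_smul_closure_forall_pow_le (hC : IsClosedCone C) (hfC : MapsTo f C C)
    (hfhom : IsHomog C f) {M : ℝ} (hM : 0 ≤ M) (hfM : ∀ x ∈ C, ‖f x‖ ≤ M * ‖x‖) {q : ℝ}
    (hq : 0 < q) {m n : ℕ} {x : E} (hx : x ∈ C) (hx1 : ‖x‖ ≤ 1)
    (hn : max 1 (M / q) ^ m * q ^ n < ‖f^[n] x‖) :
    ∃ y ∈ q⁻¹ • closure (f '' (C ∩ closedBall 0 1)), ∀ i ≤ m, q ^ i ≤ ‖f^[i] y‖ := by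
  obtain ⟨j, hj, hgrow⟩ := exists_pos_forall_pow_mul_le (a := fun j => ‖f^[j] x‖) hM hq
    (fun j i => by
      simpa only [add_comm j i, Function.iterate_add_apply] using
        norm_iterate_le_pow_mul_s1 hfC hM hfM i (hfC.iterate j hx))
    (by simpa using hx1) hn
  have hjC : f^[j] x ∈ C := hfC.iterate j hx
  have hw : ‖f^[j] x‖⁻¹ • f^[j] x ∈ C ∩ closedBall 0 1 := by
    refine ⟨hC.2.2.1 _ (by positivity) _ hjC, ?_⟩
    rw [mem_closedBall_zero_iff, norm_smul, norm_inv, norm_norm, inv_mul_cancel₀ hj.ne']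
  refine ⟨q⁻¹ • f (‖f^[j] x‖⁻¹ • f^[j] x),
    smul_mem_smul_set (subset_closure (mem_image_of_mem f hw)), fun i hi => ?_⟩
  have hiter : f^[i] (q⁻¹ • f (‖f^[j] x‖⁻¹ • f^[j] x))
      = (q⁻¹ * ‖f^[j] x‖⁻¹) • f^[j + (i + 1)] x := by
    rw [hfhom.iterate hfC i _ (by positivity) _ (hfC hw.1), ← Function.iterate_succ_apply,
      hfhom.iterate hfC _ _ (by positivity) _ hjC, smul_smul, add_comm j,
      Function.iterate_add_apply]
  rw [hiter, norm_smul, Real.norm_of_nonneg (by positivity)]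
  calc q ^ i = (q⁻¹ * ‖f^[j] x‖⁻¹) * (q ^ (i + 1) * ‖f^[j] x‖) := by
        field_simp; ring
    _ ≤ (q⁻¹ * ‖f^[j] x‖⁻¹) * ‖f^[j + (i + 1)] x‖ := by
        gcongr; exact hgrow (i + 1) (by omega)

theorem le_coneSpecRad_of_pow_le_coneNorm_iterate (hC : IsClosedCone C) (hfC : MapsTo f C C)
    (hfcont : ContinuousOn f C) (hfcomp : IsCompactMapOn C f) (hfhom : IsHomog C f) {q : ℝ}
    (hq : ∀ n ≠ 0, q ^ n ≤ coneNorm C f^[n]) : q ≤ coneSpecRad C f := by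
  obtain ⟨M, hM, hfM⟩ := hfcomp.exists_norm_le_mul hC hfhom
  refine le_of_forall_lt_imp_le_of_dense fun q' hq' => ?_
  rcases le_or_gt q' 0 with hq'0 | hq'0
  · exact hq'0.trans (coneSpecRad_nonneg hfC hM hfM)
  have hK : IsCompact (q'⁻¹ • closure (f '' (C ∩ closedBall 0 1))) :=
    (hfcomp _ inter_subset_left (isBounded_closedBall.subset inter_subset_right)).smul _
  have hKC : q'⁻¹ • closure (f '' (C ∩ closedBall 0 1)) ⊆ C := by
    rintro _ ⟨v, hv, rfl⟩
    exact hC.2.2.1 _ (by positivity) _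
      (closure_minimal (image_subset_iff.2 fun x hx => hfC hx.1) hC.1 hv)
  have hwindows : ∀ m, ∃ y ∈ q'⁻¹ • closure (f '' (C ∩ closedBall 0 1)),
      ∀ i ≤ m, q' ^ i ≤ ‖f^[i] y‖ := by
    intro m
    obtain ⟨n, hn, hn0⟩ := ((tendsto_pow_atTop_atTop_of_one_lt ((one_lt_div hq'0).2 hq')
      |>.eventually_gt_atTop (max 1 (M / q') ^ m)).and (eventually_ne_atTop 0)).exists
    rw [div_pow, lt_div_iff₀ (by positivity)] at hn
    obtain ⟨x, hx, hx1, hxn⟩ :=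
      exists_lt_norm_of_lt_coneNorm (by positivity) (hn.trans_le (hq n hn0))
    exact exists_mem_smul_closure_forall_pow_le hC hfC hfhom hM hfM hq'0 hx hx1 hxn
  obtain ⟨z, hzC, hz⟩ := exists_forall_pow_le_norm_iterate hfC hfcont hK hKC hwindows
  exact (le_limsup_rpow_inv hq'0.le (Eventually.of_forall hz)
    (isBoundedUnder_norm_iterate_rpow_inv hfC hM hfM hzC)).trans (le_coneSpecRad hfC hM hfM hzC)

theorem tendstoUniformlyOn_of_tendsto_coneNorm_sub (hC : IsClosedCone C)
    (hfhom : IsHomog C f) (hfcomp : IsCompactMapOn C f) {ι : Type*} {p : Filter ι}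
    {F : ι → E → E} (hFhom : ∀ i, IsHomog C (F i)) (hFcomp : ∀ i, IsCompactMapOn C (F i))
    (hconv : Tendsto (fun i => coneNorm C (fun x => f x - F i x)) p (𝓝 0)) (R : ℝ) :
    TendstoUniformlyOn F f p (C ∩ closedBall 0 R) := by
  rw [Metric.tendstoUniformlyOn_iff]
  intro ε hε
  have hconvR : Tendsto (fun i => coneNorm C (fun x => f x - F i x) * R) p (𝓝 0) := by
    simpa using hconv.mul_const R
  filter_upwards [hconvR.eventually_lt_const hε] with i hi x hx
  obtain ⟨Bf, hBf⟩ := hfcomp.exists_norm_le 1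
  obtain ⟨BF, hBF⟩ := (hFcomp i).exists_norm_le 1
  have hdiff : ∀ y ∈ C, ‖y‖ ≤ 1 → ‖f y - F i y‖ ≤ Bf + BF := fun y hy hy1 =>
    (norm_sub_le _ _).trans (add_le_add (hBf y hy hy1) (hBF y hy hy1))
  calc dist (f x) (F i x) = ‖f x - F i x‖ := dist_eq_norm _ _
    _ ≤ coneNorm C (fun x => f x - F i x) * ‖x‖ :=
        (hfhom.sub (hFhom i)).norm_le_mul hC (fun y hy hy1 => norm_le_coneNorm hdiff hy hy1) hx.1
    _ ≤ coneNorm C (fun x => f x - F i x) * R :=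
        mul_le_mul_of_nonneg_left (mem_closedBall_zero_iff.1 hx.2) coneNorm_nonneg
    _ < ε := hi

theorem eventually_coneSpecRad_le_rpow_coneNorm_iterate_add (hC : IsClosedCone C)
    (hfC : MapsTo f C C) {M : ℝ} (hM : 0 ≤ M) (hfM : ∀ x ∈ C, ‖f x‖ ≤ M * ‖x‖) {ι : Type*}
    {p : Filter ι} {F : ι → E → E} (hFC : ∀ i, MapsTo (F i) C C) (hFhom : ∀ i, IsHomog C (F i))
    {MF : ι → ℝ} (hMF : ∀ i, 0 ≤ MF i) (hFM : ∀ i, ∀ x ∈ C, ‖F i x‖ ≤ MF i * ‖x‖) {n : ℕ}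
    (hn : n ≠ 0) (hF : TendstoUniformlyOn (fun i => (F i)^[n]) f^[n] p (C ∩ closedBall 0 1))
    {ε : ℝ} (hε : 0 < ε) :
    ∀ᶠ i in p, coneSpecRad C (F i) ≤ (coneNorm C f^[n] + ε) ^ (n : ℝ)⁻¹ := by
  filter_upwards [Metric.tendstoUniformlyOn_iff.1 hF ε hε] with i hi
  refine coneSpecRad_le_rpow_of_norm_iterate_le hC (hFC i) (hFhom i) (hMF i) (hFM i) hn
    (add_pos_of_nonneg_of_pos coneNorm_nonneg hε) fun x hx hx1 => ?_
  have hdist := (hi x ⟨hx, mem_closedBall_zero_iff.2 hx1⟩).le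
  rw [dist_comm] at hdist
  exact (norm_le_norm_add_const_of_dist_le hdist).trans
    (add_le_add_left (norm_iterate_le_coneNorm hfC hM hfM n hx hx1) ε)

end ConeMaps

theorem limsup_coneSpecRad_le_general
    (C : Set X) (hC : IsClosedCone C) (f : X → X)
    (hfC : Set.MapsTo f C C) (hfcont : ContinuousOn f C)
    (hfcomp : IsCompactMapOn C f) (hfhom : IsHomog C f)
    (fk : ℕ → X → X)
    (hfkC : ∀ k, Set.MapsTo (fk k) C C)
    (hfkcomp : ∀ k, IsCompactMapOn C (fk k))
    (hfkhom : ∀ k, IsHomog C (fk k))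
    (hconv : Filter.Tendsto (fun k => coneNorm C (fun x => f x - fk k x))
      Filter.atTop (nhds 0)) :
    Filter.limsup (fun k => coneSpecRad C (fk k)) Filter.atTop ≤ coneSpecRad C f := by
  obtain ⟨M, hM, hfM⟩ := hfcomp.exists_norm_le_mul hC hfhom
  choose Mk hMk hfkM using fun k => (hfkcomp k).exists_norm_le_mul hC (hfkhom k)
  have hiter := tendstoUniformlyOn_iterate hC.1 hfC hfcont hfcomp hfkC
    (tendstoUniformlyOn_of_tendsto_coneNorm_sub hC hfhom hfcomp hfkhom hfkcomp hconv)
  set L := limsup (fun k => coneSpecRad C (fk k)) atTop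
  rcases le_or_gt L 0 with hL | hL
  · exact hL.trans (coneSpecRad_nonneg hfC hM hfM)
  refine le_coneSpecRad_of_pow_le_coneNorm_iterate hC hfC hfcont hfcomp hfhom fun n hn =>
    le_of_forall_pos_le_add fun ε hε => ?_
  have hB : 0 < coneNorm C f^[n] + ε := add_pos_of_nonneg_of_pos coneNorm_nonneg hε
  have hLB : L ≤ (coneNorm C f^[n] + ε) ^ (n : ℝ)⁻¹ := limsup_le_of_le
    (isCoboundedUnder_le_of_le atTop fun k => coneSpecRad_nonneg (hfkC k) (hMk k) (hfkM k))
    (eventually_coneSpecRad_le_rpow_coneNorm_iterate_add hC hfC hM hfM hfkC hfkhom hMk hfkM hn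
      (hiter n 1) hε)
  calc L ^ n ≤ ((coneNorm C f^[n] + ε) ^ (n : ℝ)⁻¹) ^ n := pow_le_pow_left₀ hL.le hLB n
    _ = coneNorm C f^[n] + ε := Real.rpow_inv_natCast_pow hB.le hn

/-- Upper semicontinuity of the cone spectral radius: if `f` and the `f_k` are continuous
compact homogeneous order-preserving maps of the closed cone `C` into itself and
`‖f - f_k‖_C → 0`, then `limsup_k r_C(f_k) ≤ r_C(f)`. -/
theorem limsup_coneSpecRad_le
    (C : Set X) (hC : IsClosedCone C) (f : X → X)
    (hfC : Set.MapsTo f C C) (hfcont : ContinuousOn f C)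
    (hfcomp : IsCompactMapOn C f) (hfhom : IsHomog C f) (hford : IsOrdPres C f)
    (fk : ℕ → X → X)
    (hfkC : ∀ k, Set.MapsTo (fk k) C C)
    (hfkcont : ∀ k, ContinuousOn (fk k) C)
    (hfkcomp : ∀ k, IsCompactMapOn C (fk k))
    (hfkhom : ∀ k, IsHomog C (fk k))
    (hfkord : ∀ k, IsOrdPres C (fk k))
    (hconv : Filter.Tendsto (fun k => coneNorm C (fun x => f x - fk k x))
      Filter.atTop (nhds 0)) :
    Filter.limsup (fun k => coneSpecRad C (fk k)) Filter.atTop ≤ coneSpecRad C f :=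
  limsup_coneSpecRad_le_general C hC f hfC hfcont hfcomp hfhom fk hfkC hfkcomp hfkhom hconv
end
end

section
/- For each integer k ≥ 3, let ε_k = (1/2)(1 − 1/(2^k − 1)) and define φ_k : [0,1] → [0,1] by φ_k(t) = t² for 0 ≤ t ≤ (1/2)^k and φ_k(t) = (1/2)^{2k} + ε_k(t − (1/2)^k) for (1/2)^k ≤ t ≤ 1; let T_k : K → K be defined by (T_k f)(t) = f(φ_k(t)), and let T : K → K be defined by (Tf)(t) = f(t/2). Then each T_k is a continuous compact map of K into K, ‖T − T_k‖_K → 0 as k → ∞, r_K(T_k) = 0 for every k ≥ 3, while r_K(T) = 1/2; in particular lim_{k→∞} r_K(T_k) ≠ r_K(T). -/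
open Filter Topology Set

noncomputable section

/-- The unit interval `[0,1]` as a subset of `ℝ`. -/
abbrev I01 : Set ℝ := Set.Icc (0 : ℝ) 1

/-- The point `0 ∈ [0,1]`. -/
def pt0 : I01 := ⟨0, by norm_num⟩

/-- `Y`: the Banach space of continuous functions `f` on `[0,1]` with `f(0) = 0`,
realized as the subset `{f ∈ C([0,1], ℝ) : f 0 = 0}` of the sup-norm space `C([0,1], ℝ)`. -/
def Yset : Set C(I01, ℝ) := {f | f pt0 = 0}

/-- `f` is convex on `[0,1]`. -/
def ConvexOn01 (f : C(I01, ℝ)) : Prop :=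
  ∀ a b : ℝ, 0 ≤ a → 0 ≤ b → a + b = 1 → ∀ s t u : I01,
    (u : ℝ) = a * (s : ℝ) + b * (t : ℝ) → f u ≤ a * f s + b * f t

/-- The cone `K = {f ∈ Y : f is nonnegative and convex on [0,1]}`. -/
def Kset : Set C(I01, ℝ) := {f | f pt0 = 0 ∧ (∀ t, 0 ≤ f t) ∧ ConvexOn01 f}

/-- The map `t ↦ t/2` on `[0,1]`. -/
def halfCM : C(I01, I01) :=
  ⟨fun t => ⟨(t : ℝ) / 2, ⟨by have := t.2.1; linarith, by have := t.2.2; linarith⟩⟩,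
    by exact Continuous.subtype_mk (continuous_subtype_val.div_const 2) _⟩

/-- The map `T : (Tf)(t) = f(t/2)` on continuous functions on `[0,1]`. -/
def Thalf (f : C(I01, ℝ)) : C(I01, ℝ) := f.comp halfCM

/-- The cone spectrum of a map `S : K → K`:
`σ_K(S) = {ρ ≥ 0 : S f = ρ f for some f ∈ K, f ≠ 0}`. -/
def coneSpectrumK (S : C(I01, ℝ) → C(I01, ℝ)) : Set ℝ :=
  {ρ : ℝ | 0 ≤ ρ ∧ ∃ f ∈ Kset, f ≠ 0 ∧ S f = ρ • f}

/-- The cone spectral radius `r_K(S) = sup_{f ∈ K} limsup_m ‖S^m f‖^{1/m}`. -/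
def coneSpecRadK (S : C(I01, ℝ) → C(I01, ℝ)) : ℝ :=
  sSup {r : ℝ | ∃ f ∈ Kset,
    r = Filter.limsup (fun m : ℕ => ‖S^[m] f‖ ^ ((m : ℝ)⁻¹)) Filter.atTop}

/-- The cone sup-norm `‖S‖_K = sup {‖S f‖ : f ∈ K, ‖f‖ ≤ 1}` of a map `S : K → K`. -/
def coneNormK (S : C(I01, ℝ) → C(I01, ℝ)) : ℝ :=
  sSup {r : ℝ | ∃ f ∈ Kset, ‖f‖ ≤ 1 ∧ r = ‖S f‖}

/-- `ε_k = (1/2)(1 - 1/(2^k - 1))`. -/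
def epsK (k : ℕ) : ℝ := (1 / 2) * (1 - 1 / (2 ^ k - 1))

/-- `φ_k(t) = t²` for `0 ≤ t ≤ (1/2)^k` and
`φ_k(t) = (1/2)^{2k} + ε_k (t - (1/2)^k)` for `(1/2)^k ≤ t ≤ 1`. -/
def phiK (k : ℕ) (t : ℝ) : ℝ :=
  if t ≤ (1 / 2 : ℝ) ^ k then t ^ 2
  else (1 / 2 : ℝ) ^ (2 * k) + epsK k * (t - (1 / 2 : ℝ) ^ k)

/-!
`T` and `T_k` are composition operators `f ↦ f ∘ g` on the cone `K`. A function `f ∈ K`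
satisfies `f(s) ≤ s‖f‖` and, by convexity, is `‖f‖/(1-β)`-Lipschitz on `[0, β]`; hence
`‖f ∘ g‖ ≤ (sup g)‖f‖`, and `‖f ∘ g₁ - f ∘ g₂‖ ≤ 2‖f‖ sup |g₁ - g₂|` when `g₁, g₂ ≤ 1/2`.
The map `φ_k` has supporting lines with slopes in `[0, 1/2]`, so it is convex and
`1/2`-Lipschitz, and `0 ≤ t/2 - φ_k(t) ≤ 2 (1/2)^k`: this gives `T_k(K) ⊆ K`, compactness of
`T_k` (Arzelà–Ascoli) and `‖T - T_k‖_K ≤ 4 (1/2)^k`. Since `φ_k(t) ≤ t/2`, every orbit enters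
`[0, δ]` after a bounded number of steps, and there `φ_k(t) = t² ≤ δ t`; so
`‖T_k^m f‖ ≤ C_δ δ^m` for every `δ > 0`, i.e. `r_K(T_k) = 0`. On the other hand
`‖T^m f‖ ≤ 2^{-m}‖f‖`, with equality for `f(t) = t`, so `r_K(T) = 1/2`.
-/

theorem limsup_rpow_inv_le_of_le_mul_pow {a : ℕ → ℝ} {C ρ : ℝ} (ha : ∀ m, 0 ≤ a m)
    (hρ : 0 ≤ ρ) (h : ∀ᶠ m in atTop, a m ≤ C * ρ ^ m) :
    limsup (fun m : ℕ => a m ^ (m : ℝ)⁻¹) atTop ≤ ρ := by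
  set C' := max C 1
  have hC' : 0 < C' := one_pos.trans_le (le_max_right _ _)
  have hlim : Tendsto (fun m : ℕ => C' ^ (m : ℝ)⁻¹ * ρ) atTop (𝓝 ρ) := by
    have := ((Real.continuousAt_const_rpow hC'.ne').tendsto.comp
      tendsto_inv_atTop_nhds_zero_nat).mul_const ρ
    simpa using this
  calc limsup (fun m : ℕ => a m ^ (m : ℝ)⁻¹) atTop
      ≤ limsup (fun m : ℕ => C' ^ (m : ℝ)⁻¹ * ρ) atTop := by
        refine limsup_le_limsup ?_
          (isCoboundedUnder_le_of_le atTop fun m => Real.rpow_nonneg (ha m) _)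
          hlim.isBoundedUnder_le
        filter_upwards [h, eventually_ne_atTop 0] with m hm hm0
        calc a m ^ (m : ℝ)⁻¹ ≤ (C' * ρ ^ m) ^ (m : ℝ)⁻¹ :=
              Real.rpow_le_rpow (ha m)
                (hm.trans (mul_le_mul_of_nonneg_right (le_max_left _ _) (by positivity)))
                (by positivity)
          _ = C' ^ (m : ℝ)⁻¹ * ρ := by
              rw [Real.mul_rpow hC'.le (by positivity), Real.pow_rpow_inv_natCast hρ hm0]
    _ = ρ := hlim.limsup_eq

theorem limsup_rpow_inv_of_eventually_eq_pow {a : ℕ → ℝ} {ρ : ℝ} (hρ : 0 ≤ ρ)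
    (h : ∀ᶠ m in atTop, a m = ρ ^ m) :
    limsup (fun m : ℕ => a m ^ (m : ℝ)⁻¹) atTop = ρ := by
  refine (limsup_congr ?_).trans (limsup_const ρ)
  filter_upwards [h, eventually_ne_atTop 0] with m hm hm0
  rw [hm, Real.pow_rpow_inv_natCast hρ hm0]

theorem ContinuousMap.isCompact_closure_of_equicontinuous {X β : Type*} [TopologicalSpace X]
    [CompactSpace X] [MetricSpace β] {A : Set C(X, β)} {s : Set β} (hs : IsCompact s)
    (hA : ∀ f ∈ A, ∀ x, f x ∈ s) (H : Equicontinuous ((↑) : A → X → β)) :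
    IsCompact (closure A) := by
  set E := ContinuousMap.isometryEquivBoundedOfCompact X β
  have hcl : closure A = E.symm '' closure (E '' A) := by
    rw [← E.symm.coe_toHomeomorph, E.symm.toHomeomorph.image_closure, E.symm.coe_toHomeomorph,
      Set.image_image]
    simp
  rw [hcl]
  refine (BoundedContinuousFunction.arzela_ascoli s hs (E '' A) ?_ ?_).image E.symm.continuous
  · rintro _ x ⟨f, hf, rfl⟩
    exact hA f hf x
  · exact H.comp fun b : E '' A => ⟨E.symm b, by obtain ⟨f, hf, hfb⟩ := b.2; simpa [← hfb] using hf⟩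

theorem ContinuousMap.iterate_comp {X Y : Type*} [TopologicalSpace X] [TopologicalSpace Y]
    (g : C(X, X)) (f : C(X, Y)) (m : ℕ) :
    (fun f : C(X, Y) => f.comp g)^[m] f = f.comp ⟨g^[m], g.continuous.iterate m⟩ := by
  induction m generalizing f with
  | zero => rfl
  | succ m ih =>
    ext t
    simpa [ih] using congrArg f (Function.Commute.self_iterate g m t)

theorem convexOn_of_le_add_mul_sub {s : Set ℝ} (hs : Convex ℝ s) {φ σ : ℝ → ℝ}
    (h : ∀ u ∈ s, ∀ t ∈ s, φ u + σ u * (t - u) ≤ φ t) : ConvexOn ℝ s φ := by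
  refine ⟨hs, fun x hx y hy a b ha hb hab => ?_⟩
  have hu := hs hx hy ha hb hab
  simp only [smul_eq_mul] at hu ⊢
  have h1 := mul_le_mul_of_nonneg_left (h _ hu x hx) ha
  have h2 := mul_le_mul_of_nonneg_left (h _ hu y hy) hb
  linear_combination h1 + h2 - (φ (a * x + b * y) - σ (a * x + b * y) * (a * x + b * y)) * hab

theorem iterate_le_pow_mul {φ : ℝ → ℝ} {b q : ℝ} (hq0 : 0 ≤ q) (hq1 : q ≤ 1)
    (hφ : ∀ x ∈ Icc 0 b, 0 ≤ φ x ∧ φ x ≤ q * x) {x : ℝ} (hx : x ∈ Icc 0 b) (n : ℕ) :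
    φ^[n] x ≤ q ^ n * x := by
  have hmaps : MapsTo φ (Icc 0 b) (Icc 0 b) := fun y hy =>
    ⟨(hφ y hy).1, (hφ y hy).2.trans ((mul_le_of_le_one_left hy.1 hq1).trans hy.2)⟩
  induction n with
  | zero => simp
  | succ n ih =>
    rw [Function.iterate_succ_apply', pow_succ', mul_assoc]
    exact (hφ _ (hmaps.iterate n hx)).2.trans (mul_le_mul_of_nonneg_left ih hq0)

theorem coneSpecRadK_eq {S : C(I01, ℝ) → C(I01, ℝ)} {r : ℝ}
    (hle : ∀ f ∈ Kset, limsup (fun m : ℕ => ‖S^[m] f‖ ^ (m : ℝ)⁻¹) atTop ≤ r)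
    {f₀ : C(I01, ℝ)} (hf₀ : f₀ ∈ Kset)
    (h₀ : limsup (fun m : ℕ => ‖S^[m] f₀‖ ^ (m : ℝ)⁻¹) atTop = r) :
    coneSpecRadK S = r :=
  IsGreatest.csSup_eq ⟨⟨f₀, hf₀, h₀.symm⟩, by rintro _ ⟨f, hf, rfl⟩; exact hle f hf⟩

theorem coneNormK_nonneg (S : C(I01, ℝ) → C(I01, ℝ)) : 0 ≤ coneNormK S :=
  Real.sSup_nonneg (by rintro _ ⟨f, -, -, rfl⟩; exact norm_nonneg _)

theorem coneNormK_le {S : C(I01, ℝ) → C(I01, ℝ)} {C : ℝ} (hC : 0 ≤ C)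
    (h : ∀ f ∈ Kset, ‖f‖ ≤ 1 → ‖S f‖ ≤ C) : coneNormK S ≤ C :=
  Real.sSup_le (by rintro _ ⟨f, hf, hf1, rfl⟩; exact h f hf hf1) hC

theorem ConvexOn01.sub_mul_le {f : C(I01, ℝ)} (hf : ConvexOn01 f) {s u t : I01}
    (hsu : (s : ℝ) ≤ u) (hut : (u : ℝ) ≤ t) :
    ((t : ℝ) - s) * f u ≤ (t - u) * f s + (u - s) * f t := by
  rcases (hsu.trans hut).eq_or_lt with hst | hst
  · have hus : (u : ℝ) = s := le_antisymm (hut.trans hst.ge) hsu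
    rw [← hst, hus]
    simp
  · have hd : (0 : ℝ) < t - s := sub_pos.2 hst
    have key := hf ((t - u) / (t - s)) ((u - s) / (t - s)) (by bound) (by bound)
      (by field_simp; ring) s t u (by field_simp; ring)
    calc ((t : ℝ) - s) * f u ≤ (t - s) * ((t - u) / (t - s) * f s + (u - s) / (t - s) * f t) :=
          mul_le_mul_of_nonneg_left key hd.le
      _ = (t - u) * f s + (u - s) * f t := by field_simp

namespace Kset

variable {f : C(I01, ℝ)} (hf : f ∈ Kset)
include hf

theorem mul_apply_le {u t : I01} (hut : (u : ℝ) ≤ t) : (t : ℝ) * f u ≤ u * f t := by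
  have h0 : ((pt0 : I01) : ℝ) = 0 := rfl
  simpa [h0, hf.1] using hf.2.2.sub_mul_le (s := pt0) u.2.1 hut

theorem monotone : Monotone f := by
  intro u t hut
  rcases t.2.1.eq_or_lt with ht | ht
  · have hu : u = t := Subtype.ext (le_antisymm hut (ht ▸ u.2.1))
    rw [hu]
  · have hut' : (u : ℝ) ≤ t := hut
    nlinarith [mul_apply_le hf hut', mul_le_mul_of_nonneg_right hut' (hf.2.1 t)]

theorem apply_le_mul_norm (u : I01) : f u ≤ u * ‖f‖ := by
  have h1 := mul_apply_le hf (t := ⟨1, by norm_num⟩) u.2.2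
  have h2 := (le_abs_self _).trans (f.norm_coe_le_norm ⟨1, by norm_num⟩)
  simp only [one_mul] at h1
  nlinarith [u.2.1]

theorem sub_le_mul_norm {β : ℝ} (hβ : β < 1) {s u : I01} (hs : (s : ℝ) ≤ β) :
    f u - f s ≤ ‖f‖ / (1 - β) * |(u : ℝ) - s| := by
  have hβ' : 0 < 1 - β := by linarith
  rcases le_total (u : ℝ) s with hus | hsu
  · exact (sub_nonpos.2 (monotone hf hus)).trans (by positivity)
  have hchord := hf.2.2.sub_mul_le (t := ⟨1, by norm_num⟩) hsu u.2.2
  have h1 := (le_abs_self _).trans (f.norm_coe_le_norm ⟨1, by norm_num⟩)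
  have hmono := monotone hf hsu
  have hs0 := hf.2.1 s
  rw [abs_of_nonneg (sub_nonneg.2 hsu), div_mul_eq_mul_div, le_div_iff₀ hβ']
  simp only at hchord h1
  nlinarith [s.2.1, u.2.2]

theorem abs_sub_le_mul_norm {β : ℝ} (hβ : β < 1) {s u : I01} (hs : (s : ℝ) ≤ β)
    (hu : (u : ℝ) ≤ β) : |f u - f s| ≤ ‖f‖ / (1 - β) * |(u : ℝ) - s| :=
  abs_sub_le_iff.2 ⟨sub_le_mul_norm hf hβ hs, abs_sub_comm (s : ℝ) u ▸ sub_le_mul_norm hf hβ hu⟩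

theorem norm_comp_le {g : C(I01, I01)} {a : ℝ} (hg : ∀ t, (g t : ℝ) ≤ a) :
    ‖f.comp g‖ ≤ a * ‖f‖ := by
  refine (ContinuousMap.norm_le _ (mul_nonneg ((g pt0).2.1.trans (hg pt0)) (norm_nonneg f))).2
    fun t => ?_
  rw [ContinuousMap.comp_apply, Real.norm_eq_abs, abs_of_nonneg (hf.2.1 _)]
  exact (apply_le_mul_norm hf _).trans (mul_le_mul_of_nonneg_right (hg t) (norm_nonneg f))

theorem norm_comp_sub_comp_le {g₁ g₂ : C(I01, I01)} {β η : ℝ} (hβ : β < 1)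
    (h₁ : ∀ t, (g₁ t : ℝ) ≤ β) (h₂ : ∀ t, (g₂ t : ℝ) ≤ β) (hη : ∀ t, |(g₁ t : ℝ) - g₂ t| ≤ η) :
    ‖f.comp g₁ - f.comp g₂‖ ≤ ‖f‖ / (1 - β) * η := by
  have hβ' : 0 < 1 - β := by linarith
  refine (ContinuousMap.norm_le _ (by have := (abs_nonneg _).trans (hη pt0); positivity)).2
    fun t => ?_
  rw [Real.norm_eq_abs]
  exact (abs_sub_le_mul_norm hf hβ (h₂ t) (h₁ t)).trans
    (mul_le_mul_of_nonneg_left (hη t) (by positivity))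

theorem comp_mem {g : C(I01, I01)} {φ : ℝ → ℝ} (hg : ∀ t, (g t : ℝ) = φ t) (hφ0 : φ 0 = 0)
    (hconv : ConvexOn ℝ I01 φ) : f.comp g ∈ Kset := by
  refine ⟨?_, fun t => hf.2.1 _, fun a b ha hb hab s t u hu => ?_⟩
  · have : g pt0 = pt0 := Subtype.ext ((hg pt0).trans hφ0)
    simpa [this] using hf.1
  · have hw : a * (g s : ℝ) + b * g t ∈ I01 := convex_Icc 0 1 (g s).2 (g t).2 ha hb hab
    have hle : (g u : ℝ) ≤ a * g s + b * g t := by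
      rw [hg, hg, hg, hu]
      simpa using hconv.2 s.2 t.2 ha hb hab
    exact (monotone hf (show g u ≤ ⟨_, hw⟩ from hle)).trans (hf.2.2 a b ha hb hab _ _ _ rfl)

end Kset

theorem Kset.isCompact_closure_image_comp {g : C(I01, I01)} {β L : ℝ} (hβ : β < 1)
    (hgβ : ∀ t, (g t : ℝ) ≤ β) (hL : ∀ s t, |(g s : ℝ) - g t| ≤ L * |(s : ℝ) - t|)
    {D : Set C(I01, ℝ)} (hD : D ⊆ Kset) (hbd : Bornology.IsBounded D) :
    IsCompact (closure ((fun f => f.comp g) '' D)) := by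
  obtain ⟨M, hM⟩ := isBounded_iff_forall_norm_le.1 hbd
  refine ContinuousMap.isCompact_closure_of_equicontinuous (isCompact_Icc (a := -M) (b := M))
    ?_ ?_
  · rintro _ ⟨f, hf, rfl⟩ t
    exact abs_le.1 ((f.norm_coe_le_norm (g t)).trans (hM f hf))
  refine Metric.equicontinuous_of_continuity_modulus (fun d => M / (1 - β) * L * d) ?_ _ ?_
  · simpa using (tendsto_id (x := 𝓝 (0 : ℝ))).const_mul (M / (1 - β) * L)
  rintro s t ⟨_, f, hf, rfl⟩
  have hβ' : 0 < 1 - β := by linarith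
  have hM0 : 0 ≤ M / (1 - β) := div_nonneg ((norm_nonneg f).trans (hM f hf)) hβ'.le
  calc dist (f (g s)) (f (g t)) ≤ ‖f‖ / (1 - β) * |(g s : ℝ) - g t| :=
        Kset.abs_sub_le_mul_norm (hD hf) hβ (hgβ t) (hgβ s)
    _ ≤ M / (1 - β) * (L * |(s : ℝ) - t|) := by
        gcongr
        · exact hM f hf
        · exact hL s t
    _ = M / (1 - β) * L * dist s t := by rw [Subtype.dist_eq, Real.dist_eq]; ring

theorem epsK_bounds {k : ℕ} (hk : 3 ≤ k) :
    2 * (1 / 2 : ℝ) ^ k ≤ epsK k ∧ epsK k ≤ 1 / 2 ∧ 1 / 2 - epsK k ≤ (1 / 2 : ℝ) ^ k := by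
  have hx : (8 : ℝ) ≤ 2 ^ k := by
    calc (8 : ℝ) = 2 ^ 3 := by norm_num
      _ ≤ 2 ^ k := pow_le_pow_right₀ (by norm_num) hk
  rw [epsK, one_div_pow]
  have hx1 : (0 : ℝ) < 2 ^ k - 1 := by linarith
  refine ⟨?_, ?_, ?_⟩
  · field_simp
    nlinarith
  · have : 0 ≤ 1 / ((2 : ℝ) ^ k - 1) := by positivity
    linarith
  · field_simp
    nlinarith

theorem phiK_eq (k : ℕ) (t : ℝ) : phiK k t =
    if t ≤ (1 / 2 : ℝ) ^ k then t ^ 2 else ((1 / 2 : ℝ) ^ k) ^ 2 + epsK k * (t - (1 / 2) ^ k) := by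
  rw [phiK, ← pow_mul, mul_comm]

/-- The slope of a supporting line of the convex function `φ_k` at `u`. -/
def phiKSlope (k : ℕ) (u : ℝ) : ℝ := if u ≤ (1 / 2 : ℝ) ^ k then 2 * u else epsK k

section phiK

variable {k : ℕ} (hk : 3 ≤ k)
include hk

theorem phiK_add_slope_mul_le (u t : ℝ) : phiK k u + phiKSlope k u * (t - u) ≤ phiK k t := by
  obtain ⟨h1, -, -⟩ := epsK_bounds hk
  rw [phiK_eq, phiK_eq, phiKSlope]
  split_ifs with hu ht ht
  · nlinarith [sq_nonneg (t - u)]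
  · nlinarith [sq_nonneg ((1 / 2 : ℝ) ^ k - u)]
  · nlinarith
  · nlinarith

theorem phiKSlope_mem {u : ℝ} (hu : 0 ≤ u) : phiKSlope k u ∈ Icc (0 : ℝ) (1 / 2) := by
  obtain ⟨h1, h2, -⟩ := epsK_bounds hk
  have hc : (0 : ℝ) < (1 / 2) ^ k := by positivity
  unfold phiKSlope
  split_ifs <;> constructor <;> linarith

theorem phiK_sub_phiK_le {s t : ℝ} (hs : 0 ≤ s) : phiK k s - phiK k t ≤ 1 / 2 * |s - t| := by
  have hsupp := phiK_add_slope_mul_le hk s t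
  obtain ⟨h0, h1⟩ := phiKSlope_mem hk hs
  nlinarith [le_abs_self (s - t), abs_nonneg (s - t)]

theorem abs_phiK_sub_phiK_le {s t : ℝ} (hs : 0 ≤ s) (ht : 0 ≤ t) :
    |phiK k s - phiK k t| ≤ 1 / 2 * |s - t| :=
  abs_sub_le_iff.2 ⟨phiK_sub_phiK_le hk hs, abs_sub_comm s t ▸ phiK_sub_phiK_le hk ht⟩

theorem convexOn_phiK : ConvexOn ℝ univ (phiK k) :=
  convexOn_of_le_add_mul_sub convex_univ fun u _ t _ => phiK_add_slope_mul_le hk u t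

theorem phiK_nonneg (t : ℝ) : 0 ≤ phiK k t := by
  have h1 := (epsK_bounds hk).1
  have hc0 : (0 : ℝ) < (1 / 2) ^ k := by positivity
  rw [phiK_eq]
  split_ifs
  · positivity
  · nlinarith

theorem phiK_le_half {t : ℝ} (ht : 0 ≤ t) : phiK k t ≤ t / 2 := by
  obtain ⟨h1, h2, -⟩ := epsK_bounds hk
  have hc0 : (0 : ℝ) < (1 / 2) ^ k := by positivity
  rw [phiK_eq]
  split_ifs with h <;> nlinarith

theorem half_sub_phiK_le {t : ℝ} (ht1 : t ≤ 1) : t / 2 - phiK k t ≤ 2 * (1 / 2 : ℝ) ^ k := by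
  obtain ⟨h1, h2, h3⟩ := epsK_bounds hk
  have hc0 : (0 : ℝ) < (1 / 2) ^ k := by positivity
  rw [phiK_eq]
  split_ifs with h <;> nlinarith

end phiK

theorem continuous_phiK (k : ℕ) : Continuous (phiK k) := by
  rw [funext (phiK_eq k)]
  exact Continuous.if_le (by fun_prop) (by fun_prop) continuous_id continuous_const
    fun t ht => by rw [ht]; ring

def phiCM {k : ℕ} (hk : 3 ≤ k) : C(I01, I01) :=
  ⟨fun t => ⟨phiK k t, phiK_nonneg hk t, (phiK_le_half hk t.2.1).trans (by linarith [t.2.2])⟩,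
    ((continuous_phiK k).comp continuous_subtype_val).subtype_mk _⟩

section Tk

variable {k : ℕ} (hk : 3 ≤ k)
include hk

theorem coe_phiCM_iterate (m : ℕ) (t : I01) : (((phiCM hk)^[m] t : I01) : ℝ) = (phiK k)^[m] t :=
  Function.Semiconj.iterate_right (f := Subtype.val) (fun _ => rfl) m t

/-- Past `n` steps the orbit lies below `δ ≤ (1/2)^k`, where `φ_k` is the square map,
so from then on each step contracts by the factor `δ`. -/
theorem phiK_iterate_add_le {δ : ℝ} (hδ0 : 0 < δ) (hδ : δ ≤ (1 / 2 : ℝ) ^ k) {n : ℕ}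
    (hn : (1 / 2 : ℝ) ^ n ≤ δ) {t : ℝ} (ht : t ∈ I01) (j : ℕ) : (phiK k)^[n + j] t ≤ δ ^ j := by
  have hδ1 : δ ≤ 1 := hδ.trans (pow_le_one₀ (by norm_num) (by norm_num))
  have hsmall : (phiK k)^[n] t ≤ (1 / 2) ^ n * t :=
    iterate_le_pow_mul (b := 1) (by norm_num) (by norm_num)
      (fun x hx => ⟨phiK_nonneg hk x, (phiK_le_half hk hx.1).trans_eq (by ring)⟩) ht n
  have hnδ : (phiK k)^[n] t ∈ Icc 0 δ :=
    ⟨MapsTo.iterate (s := Ici 0) (fun x _ => phiK_nonneg hk x) n ht.1,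
      hsmall.trans ((mul_le_of_le_one_right (by positivity) ht.2).trans hn)⟩
  have hsq : ∀ x ∈ Icc 0 δ, 0 ≤ phiK k x ∧ phiK k x ≤ δ * x := fun x hx => by
    refine ⟨phiK_nonneg hk x, ?_⟩
    rw [phiK_eq, if_pos (hx.2.trans hδ)]
    nlinarith [hx.1, hx.2]
  rw [add_comm, Function.iterate_add_apply]
  calc (phiK k)^[j] ((phiK k)^[n] t) ≤ δ ^ j * (phiK k)^[n] t :=
        iterate_le_pow_mul hδ0.le hδ1 hsq hnδ j
    _ ≤ δ ^ j := mul_le_of_le_one_right (by positivity) (hnδ.2.trans hδ1)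

theorem norm_iterate_comp_phiCM_le {f : C(I01, ℝ)} (hf : f ∈ Kset) {δ : ℝ} (hδ0 : 0 < δ)
    (hδ : δ ≤ (1 / 2 : ℝ) ^ k) {n : ℕ} (hn : (1 / 2 : ℝ) ^ n ≤ δ) (j : ℕ) :
    ‖(fun f : C(I01, ℝ) => f.comp (phiCM hk))^[n + j] f‖ ≤ δ ^ j * ‖f‖ := by
  rw [ContinuousMap.iterate_comp]
  exact Kset.norm_comp_le hf fun t =>
    (coe_phiCM_iterate hk _ t).trans_le (phiK_iterate_add_le hk hδ0 hδ hn t.2 j)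

theorem eq_comp_phiCM {S : C(I01, ℝ) → C(I01, ℝ)}
    (hS : ∀ f : C(I01, ℝ), ∀ t s : I01, (s : ℝ) = phiK k (t : ℝ) → S f t = f s) :
    S = fun f => f.comp (phiCM hk) :=
  funext fun f => ContinuousMap.ext fun t => hS f t _ rfl

theorem mapsTo_comp_phiCM : MapsTo (fun f : C(I01, ℝ) => f.comp (phiCM hk)) Kset Kset :=
  fun _ hf => Kset.comp_mem hf (fun _ => rfl) (by simp [phiK])
    ((convexOn_phiK hk).subset (subset_univ _) (convex_Icc 0 1))

theorem isCompact_closure_image_comp_phiCM {D : Set C(I01, ℝ)} (hD : D ⊆ Kset)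
    (hbd : Bornology.IsBounded D) : IsCompact (closure ((fun f => f.comp (phiCM hk)) '' D)) :=
  Kset.isCompact_closure_image_comp (β := 1 / 2) (L := 1 / 2) (by norm_num)
    (fun t => (phiK_le_half hk t.2.1).trans (by linarith [t.2.2]))
    (fun s t => abs_phiK_sub_phiK_le hk s.2.1 t.2.1) hD hbd

theorem coneSpecRadK_comp_phiCM : coneSpecRadK (fun f => f.comp (phiCM hk)) = 0 := by
  have hzero : (0 : C(I01, ℝ)) ∈ Kset := ⟨rfl, fun _ => le_rfl, fun _ _ _ _ _ _ _ _ _ => by simp⟩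
  refine coneSpecRadK_eq (fun f hf => ?_) hzero (limsup_rpow_inv_of_eventually_eq_pow le_rfl ?_)
  · have hc : (0 : ℝ) < (1 / 2) ^ k := by positivity
    have key : ∀ δ, 0 < δ → δ ≤ (1 / 2 : ℝ) ^ k →
        limsup (fun m : ℕ => ‖(fun f => f.comp (phiCM hk))^[m] f‖ ^ (m : ℝ)⁻¹) atTop ≤ δ := by
      intro δ hδ0 hδ
      obtain ⟨n, hn⟩ := exists_pow_lt_of_lt_one hδ0 (by norm_num : (1 / 2 : ℝ) < 1)
      refine limsup_rpow_inv_le_of_le_mul_pow (C := ‖f‖ / δ ^ n) (fun m => norm_nonneg _)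
        hδ0.le ?_
      filter_upwards [eventually_ge_atTop n] with m hm
      obtain ⟨j, rfl⟩ := Nat.exists_eq_add_of_le hm
      calc _ ≤ δ ^ j * ‖f‖ := norm_iterate_comp_phiCM_le hk hf hδ0 hδ hn.le j
        _ = ‖f‖ / δ ^ n * δ ^ (n + j) := by field_simp; ring
    exact le_of_forall_gt_imp_ge_of_dense fun δ hδ =>
      (key (min δ _) (lt_min hδ hc) (min_le_right _ _)).trans (min_le_left _ _)
  · filter_upwards [eventually_ne_atTop 0] with m hm
    simp [ContinuousMap.iterate_comp, hm]

end Tk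

theorem coe_halfCM_iterate (m : ℕ) (t : I01) : ((halfCM^[m] t : I01) : ℝ) = t * (1 / 2) ^ m := by
  have hsemi : Function.Semiconj Subtype.val halfCM (· * (1 / 2 : ℝ)) := fun t => by
    change (t : ℝ) / 2 = t * (1 / 2)
    ring
  rw [hsemi.iterate_right m t, mul_right_iterate_apply]

theorem Thalf_iterate_apply (f : C(I01, ℝ)) (m : ℕ) (t : I01) :
    (Thalf^[m] f) t = f (halfCM^[m] t) := by
  change ((fun f : C(I01, ℝ) => f.comp halfCM)^[m] f) t = _
  rw [ContinuousMap.iterate_comp]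
  rfl

theorem norm_Thalf_iterate_le {f : C(I01, ℝ)} (hf : f ∈ Kset) (m : ℕ) :
    ‖Thalf^[m] f‖ ≤ (1 / 2) ^ m * ‖f‖ := by
  change ‖(fun f : C(I01, ℝ) => f.comp halfCM)^[m] f‖ ≤ _
  rw [ContinuousMap.iterate_comp]
  refine Kset.norm_comp_le hf fun t => ?_
  change ((halfCM^[m] t : I01) : ℝ) ≤ _
  rw [coe_halfCM_iterate]
  exact mul_le_of_le_one_left (by positivity) t.2.2

theorem restrict_id_mem_Kset : (ContinuousMap.id ℝ).restrict I01 ∈ Kset :=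
  ⟨rfl, fun t => t.2.1, fun _ _ _ _ _ _ _ _ hu => hu.le⟩

theorem norm_Thalf_iterate_restrict_id (m : ℕ) :
    ‖Thalf^[m] ((ContinuousMap.id ℝ).restrict I01)‖ = (1 / 2) ^ m := by
  have hle := norm_Thalf_iterate_le restrict_id_mem_Kset m
  have hid : ‖(ContinuousMap.id ℝ).restrict I01‖ ≤ 1 :=
    (ContinuousMap.norm_le _ zero_le_one).2 fun t => by simpa [abs_of_nonneg t.2.1] using t.2.2
  have hge := (Thalf^[m] ((ContinuousMap.id ℝ).restrict I01)).norm_coe_le_norm ⟨1, by simp⟩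
  rw [Thalf_iterate_apply] at hge
  simp only [ContinuousMap.restrict_apply, ContinuousMap.id_apply, coe_halfCM_iterate, one_mul,
    Real.norm_eq_abs, abs_of_nonneg (by positivity : (0 : ℝ) ≤ (1 / 2) ^ m)] at hge
  nlinarith [pow_nonneg (by norm_num : (0 : ℝ) ≤ 1 / 2) m]

theorem coneSpecRadK_Thalf : coneSpecRadK Thalf = 1 / 2 :=
  coneSpecRadK_eq
    (fun f hf => limsup_rpow_inv_le_of_le_mul_pow (C := ‖f‖) (fun m => norm_nonneg _)
      (by norm_num) (Eventually.of_forall fun m => (norm_Thalf_iterate_le hf m).trans_eq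
        (mul_comm _ _)))
    restrict_id_mem_Kset
    (limsup_rpow_inv_of_eventually_eq_pow (by norm_num)
      (Eventually.of_forall norm_Thalf_iterate_restrict_id))

theorem coneNormK_Thalf_sub_comp_phiCM_le {k : ℕ} (hk : 3 ≤ k) :
    coneNormK (fun f => Thalf f - f.comp (phiCM hk)) ≤ 4 * (1 / 2) ^ k :=
  coneNormK_le (by positivity) fun f hf hf1 => by
    have hdist : ∀ t : I01, |(halfCM t : ℝ) - phiCM hk t| ≤ 2 * (1 / 2) ^ k := fun t => by
      change |(t : ℝ) / 2 - phiK k t| ≤ _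
      rw [abs_of_nonneg (sub_nonneg.2 (phiK_le_half hk t.2.1))]
      exact half_sub_phiK_le hk t.2.2
    calc ‖Thalf f - f.comp (phiCM hk)‖ ≤ ‖f‖ / (1 - 1 / 2) * (2 * (1 / 2) ^ k) :=
          Kset.norm_comp_sub_comp_le hf (by norm_num)
            (fun t => by change (t : ℝ) / 2 ≤ 1 / 2; linarith [t.2.2])
            (fun t => (phiK_le_half hk t.2.1).trans (by linarith [t.2.2])) hdist
      _ = 4 * (1 / 2) ^ k * ‖f‖ := by ring
      _ ≤ 4 * (1 / 2) ^ k := mul_le_of_le_one_right (by positivity) hf1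

/-- Suppose that for each `k ≥ 3` the map `T_k : K → K` is given by `(T_k f)(t) = f(φ_k(t))`.
Then each `T_k` is a continuous compact map of `K` into itself, `‖T - T_k‖_K → 0` as
`k → ∞`, `r_K(T_k) = 0` for every `k ≥ 3`, while `r_K(T) = 1/2`; in particular
`r_K(T_k)` does not converge to `r_K(T)`. -/
theorem Tk_discontinuity
    (Tk : ℕ → C(I01, ℝ) → C(I01, ℝ))
    (hTk : ∀ k, 3 ≤ k → ∀ f : C(I01, ℝ), ∀ t s : I01,
      (s : ℝ) = phiK k (t : ℝ) → Tk k f t = f s) :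
    (∀ k, 3 ≤ k → Set.MapsTo (Tk k) Kset Kset ∧ ContinuousOn (Tk k) Kset ∧
        ∀ D ⊆ Kset, Bornology.IsBounded D → IsCompact (closure (Tk k '' D))) ∧
      Filter.Tendsto (fun k => coneNormK (fun f => Thalf f - Tk k f))
        Filter.atTop (nhds 0) ∧
      (∀ k, 3 ≤ k → coneSpecRadK (Tk k) = 0) ∧
      coneSpecRadK Thalf = 1 / 2 ∧
      ¬Filter.Tendsto (fun k => coneSpecRadK (Tk k)) Filter.atTop
        (nhds (coneSpecRadK Thalf)) := by
  have hTk_eq k (hk : 3 ≤ k) := eq_comp_phiCM hk (hTk k hk)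
  have hrad : ∀ k, 3 ≤ k → coneSpecRadK (Tk k) = 0 := fun k hk => by
    rw [hTk_eq k hk, coneSpecRadK_comp_phiCM]
  refine ⟨fun k hk => ?_, ?_, hrad, coneSpecRadK_Thalf, ?_⟩
  · rw [hTk_eq k hk]
    exact ⟨mapsTo_comp_phiCM hk, (ContinuousMap.continuous_precomp _).continuousOn,
      fun D hD hbd => isCompact_closure_image_comp_phiCM hk hD hbd⟩
  · refine squeeze_zero' (g := fun k => 4 * (1 / 2 : ℝ) ^ k) (Eventually.of_forall fun k => coneNormK_nonneg _)
      (eventually_atTop.2 ⟨3, fun k hk => ?_⟩)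
      (by simpa using (tendsto_pow_atTop_nhds_zero_of_lt_one (by norm_num : (0 : ℝ) ≤ 1 / 2)
        (by norm_num)).const_mul 4)
    rw [hTk_eq k hk]
    exact coneNormK_Thalf_sub_comp_phiCM_le hk
  · rw [coneSpecRadK_Thalf]
    intro h
    have h0 : Tendsto (fun k => coneSpecRadK (Tk k)) atTop (𝓝 0) :=
      tendsto_const_nhds.congr' (eventually_atTop.2 ⟨3, fun k hk => (hrad k hk).symm⟩)
    exact absurd (tendsto_nhds_unique h h0) (by norm_num)
end
end

section
/- Let C be a closed cone in a real Banach space X, let f : C → C be an order-preserving homogeneous map, and let x, y ∈ C with x ≠ 0 be such that y dominates x. If λ·x ≤ f(x) and f(y) ≤ μ·y for some λ, μ ≥ 0, then λ ≤ μ. -/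
/-!
Iterating the three inequalities with monotonicity and homogeneity of `f` gives
`λ^k x ≤ f^k x ≤ β f^k y ≤ β μ^k y`. If `μ < λ`, dividing by `λ^k` yields
`x ≤ β (μ/λ)^k y` with `β (μ/λ)^k → 0`; closedness of `C` then gives `-x ∈ C`, so `x = 0`.
-/

open Filter Topology Set

noncomputable section

variable {X : Type*} [NormedAddCommGroup X] [NormedSpace ℝ X] [CompleteSpace X]

/-- `y` dominates `x` in the cone `C`: there exists `β > 0` with `x ≤ β • y`. -/
def Dominates (C : Set X) (y x : X) : Prop := ∃ β : ℝ, 0 < β ∧ coneLE C x (β • y)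

section

omit [CompleteSpace X]

variable {C : Set X} {f : X → X}

theorem IsClosedCone.smul_mem_s11 (hC : IsClosedCone C) {a : ℝ} (ha : 0 ≤ a) {x : X} (hx : x ∈ C) :
    a • x ∈ C :=
  hC.2.2.1 a ha x hx

theorem IsClosedCone.add_mem_s11 (hC : IsClosedCone C) {x y : X} (hx : x ∈ C) (hy : y ∈ C) :
    x + y ∈ C := by
  have hmid : (1 / 2 : ℝ) • x + (1 / 2 : ℝ) • y ∈ C :=
    hC.2.1 hx hy (by norm_num) (by norm_num) (by norm_num)
  have hdouble := hC.smul_mem_s11 zero_le_two hmid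
  rwa [smul_add, smul_smul, smul_smul, show (2 : ℝ) * (1 / 2) = 1 by norm_num, one_smul,
    one_smul] at hdouble

theorem IsClosedCone.zero_mem_s11 (hC : IsClosedCone C) (hne : C.Nonempty) : (0 : X) ∈ C := by
  obtain ⟨x, hx⟩ := hne
  simpa using hC.smul_mem_s11 le_rfl hx

theorem coneLE.trans (hC : IsClosedCone C) {x y z : X} (hxy : coneLE C x y)
    (hyz : coneLE C y z) : coneLE C x z := by
  simpa [coneLE] using hC.add_mem_s11 hyz hxy

theorem coneLE.smul (hC : IsClosedCone C) {a : ℝ} (ha : 0 ≤ a) {x y : X}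
    (hxy : coneLE C x y) : coneLE C (a • x) (a • y) := by
  simpa [coneLE, smul_sub] using hC.smul_mem_s11 ha hxy

theorem IsClosedCone.eq_zero_of_le_smul (hC : IsClosedCone C) {x y : X} (hx : x ∈ C)
    {t : ℕ → ℝ} (ht : Tendsto t atTop (𝓝 0)) (hle : ∀ k, coneLE C x (t k • y)) : x = 0 := by
  have hlim : Tendsto (fun k => t k • y - x) atTop (𝓝 (-x)) := by
    simpa using (ht.smul_const y).sub_const x
  exact hC.2.2.2 x hx (hC.1.mem_of_tendsto hlim (Eventually.of_forall hle))

theorem pow_smul_le_iterate (hC : IsClosedCone C) (hfC : MapsTo f C C) (hfhom : IsHomog C f)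
    (hford : IsOrdPres C f) {x : X} (hx : x ∈ C) {lam : ℝ} (hlam : 0 ≤ lam)
    (h : coneLE C (lam • x) (f x)) (k : ℕ) : coneLE C (lam ^ k • x) (f^[k] x) := by
  induction k with
  | zero => simpa [coneLE] using hC.zero_mem_s11 ⟨x, hx⟩
  | succ k ih =>
    have hpow : 0 ≤ lam ^ k := pow_nonneg hlam k
    have hmono := hford _ (hC.smul_mem_s11 hpow hx) _ (hfC.iterate k hx) ih
    rw [hfhom _ hpow _ hx, ← Function.iterate_succ_apply' f] at hmono
    refine coneLE.trans hC ?_ hmono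
    simpa [pow_succ, mul_smul] using coneLE.smul hC hpow h

theorem iterate_le_pow_smul (hC : IsClosedCone C) (hfC : MapsTo f C C) (hfhom : IsHomog C f)
    (hford : IsOrdPres C f) {y : X} (hy : y ∈ C) {mu : ℝ} (hmu : 0 ≤ mu)
    (h : coneLE C (f y) (mu • y)) (k : ℕ) : coneLE C (f^[k] y) (mu ^ k • y) := by
  induction k with
  | zero => simpa [coneLE] using hC.zero_mem_s11 ⟨y, hy⟩
  | succ k ih =>
    have hpow : 0 ≤ mu ^ k := pow_nonneg hmu k
    have hmono := hford _ (hfC.iterate k hy) _ (hC.smul_mem_s11 hpow hy) ih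
    rw [hfhom _ hpow _ hy, ← Function.iterate_succ_apply' f] at hmono
    refine coneLE.trans hC hmono ?_
    simpa [pow_succ, mul_smul] using coneLE.smul hC hpow h

theorem iterate_le_smul_iterate (hC : IsClosedCone C) (hfC : MapsTo f C C) (hfhom : IsHomog C f)
    (hford : IsOrdPres C f) {x y : X} (hx : x ∈ C) (hy : y ∈ C) {β : ℝ} (hβ : 0 ≤ β)
    (h : coneLE C x (β • y)) (k : ℕ) : coneLE C (f^[k] x) (β • f^[k] y) := by
  induction k with
  | zero => simpa using h
  | succ k ih =>
    have hmono := hford _ (hfC.iterate k hx) _ (hC.smul_mem_s11 hβ (hfC.iterate k hy)) ih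
    rwa [hfhom _ hβ _ (hfC.iterate k hy), ← Function.iterate_succ_apply' f,
      ← Function.iterate_succ_apply' f] at hmono

end

theorem le_of_dominates_general
    (C : Set X) (hC : IsClosedCone C) (f : X → X)
    (hfC : Set.MapsTo f C C) (hfhom : IsHomog C f) (hford : IsOrdPres C f)
    (x y : X) (hx : x ∈ C) (hy : y ∈ C) (hx0 : x ≠ 0)
    (hdom : Dominates C y x)
    (lam mu : ℝ) (hmu : 0 ≤ mu)
    (h1 : coneLE C (lam • x) (f x)) (h2 : coneLE C (f y) (mu • y)) :
    lam ≤ mu := by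
  obtain ⟨β, hβ, hxy⟩ := hdom
  by_contra! hlt
  have hlam : 0 < lam := hmu.trans_lt hlt
  have hchain (k : ℕ) : coneLE C (lam ^ k • x) ((β * mu ^ k) • y) := by
    have hfx := pow_smul_le_iterate hC hfC hfhom hford hx hlam.le h1 k
    have hfxy := iterate_le_smul_iterate hC hfC hfhom hford hx hy hβ.le hxy k
    have hfy := coneLE.smul hC hβ.le (iterate_le_pow_smul hC hfC hfhom hford hy hmu h2 k)
    rw [smul_smul] at hfy
    exact (hfx.trans hC hfxy).trans hC hfy
  have hratio : Tendsto (fun k : ℕ => β * (mu / lam) ^ k) atTop (𝓝 0) := by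
    simpa using (tendsto_pow_atTop_nhds_zero_of_lt_one (div_nonneg hmu hlam.le)
      ((div_lt_one hlam).2 hlt)).const_mul β
  refine hx0 (hC.eq_zero_of_le_smul (y := y) hx hratio fun k => ?_)
  have hk : lam ^ k ≠ 0 := (pow_pos hlam k).ne'
  convert coneLE.smul hC (inv_nonneg.2 (pow_pos hlam k).le) (hchain k) using 1
  · rw [smul_smul, inv_mul_cancel₀ hk, one_smul]
  · rw [smul_smul, div_pow]
    congr 1
    ring

/-- Let `f : C → C` be an order-preserving homogeneous map on a closed cone `C`, and
let `x, y ∈ C` with `x ≠ 0` be such that `y` dominates `x`. If `λ • x ≤ f x` and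
`f y ≤ μ • y`, then `λ ≤ μ`. -/
theorem le_of_dominates
    (C : Set X) (hC : IsClosedCone C) (f : X → X)
    (hfC : Set.MapsTo f C C) (hfhom : IsHomog C f) (hford : IsOrdPres C f)
    (x y : X) (hx : x ∈ C) (hy : y ∈ C) (hx0 : x ≠ 0)
    (hdom : Dominates C y x)
    (lam mu : ℝ) (hlam : 0 ≤ lam) (hmu : 0 ≤ mu)
    (h1 : coneLE C (lam • x) (f x)) (h2 : coneLE C (f y) (mu • y)) :
    lam ≤ mu :=
  le_of_dominates_general C hC f hfC hfhom hford x y hx hy hx0 hdom lam mu hmu h1 h2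
end
end

section
/- Fix n ≥ 2, let A be the n×n diagonal matrix with diagonal (1, 0, …, 0), and define f on the cone Pos_n(ℝ) of real positive semidefinite symmetric n×n matrices by f(X) = (tr(XA)·X)^{1/2}, the positive semidefinite square root. Then f is a continuous order-preserving homogeneous map of Pos_n(ℝ) into itself, and its cone spectrum equals [0,1]: for every ρ ∈ [0,1] there exists X ∈ Pos_n(ℝ), X ≠ 0, with f(X) = ρX (in particular, for 0 ≤ θ ≤ 2π the rank-one matrix Z_θ with upper-left 2×2 block [[cos²θ, cosθsinθ],[cosθsinθ, sin²θ]] and zeros elsewhere satisfies f(Z_θ) = |cos θ| Z_θ), and no ρ > 1 is an eigenvalue of f on Pos_n(ℝ) \ {0}. -/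
open Matrix Filter Topology Set

noncomputable section

/-- The `n × n` diagonal matrix with diagonal `(1, 0, …, 0)`. -/
def Amat (n : ℕ) : Matrix (Fin n) (Fin n) ℝ :=
  Matrix.diagonal (fun i => if (i : ℕ) = 0 then (1 : ℝ) else 0)

section

open scoped ComplexOrder

/-- The positive semidefinite square root of a positive semidefinite matrix (the definition
of `Matrix.PosSemidef.sqrt` in the older Mathlib, since removed). -/
def Matrix.PosSemidef.sqrt {n 𝕜 : Type*} [Fintype n] [DecidableEq n] [RCLike 𝕜]
    {A : Matrix n n 𝕜} (hA : A.PosSemidef) : Matrix n n 𝕜 :=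
  hA.1.eigenvectorUnitary.1 * diagonal ((↑) ∘ (Real.sqrt ∘ hA.1.eigenvalues)) *
    (star hA.1.eigenvectorUnitary : Matrix n n 𝕜)

end

/-- The rank-one positive semidefinite matrix `Z_θ` with upper-left `2 × 2` block
`[[cos²θ, cosθ sinθ], [cosθ sinθ, sin²θ]]` and zeros elsewhere. -/
def Zmat (n : ℕ) (θ : ℝ) : Matrix (Fin n) (Fin n) ℝ := fun i j =>
  if (i : ℕ) = 0 ∧ (j : ℕ) = 0 then Real.cos θ ^ 2
  else if (i : ℕ) = 0 ∧ (j : ℕ) = 1 then Real.cos θ * Real.sin θ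
  else if (i : ℕ) = 1 ∧ (j : ℕ) = 0 then Real.cos θ * Real.sin θ
  else if (i : ℕ) = 1 ∧ (j : ℕ) = 1 then Real.sin θ ^ 2
  else 0

/-!
On positive semidefinite `X` the map is `X ↦ √(tr(XA) X)`, so homogeneity and the cone property
are algebra of square roots, continuity is continuity of the matrix square root, and monotonicity
is operator monotonicity of the square root. For real matrices the latter is the eigenvector
argument: if `√B - √A` had an eigenvalue `t < 0` with unit eigenvector `v`, then writing
`B - A = √B (√B - √A) + (√B - √A) √A`, the identity
`0 ≤ ⟪v, (B - A) v⟫ = t (⟪v, √B v⟫ + ⟪v, √A v⟫)` forces `√B v = √A v = 0`, hence `t v = 0`.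

`Z_θ` is the orthogonal projection onto `(cos θ, sin θ, 0, …, 0)`, so
`f(Z_θ) = √(cos²θ Z_θ) = |cos θ| Z_θ`, and every `ρ ∈ [0,1]` is `cos θ` for some `θ`.
Conversely `f(X) = ρX` gives `ρ² X² = X₀₀ X`; at the entry `(0,0)` this reads
`ρ² Σⱼ X_{j0}² = X₀₀² ≤ Σⱼ X_{j0}²`, so `ρ > 1` forces `X₀₀ = 0`, then `X² = 0` and `X = 0`.
-/

open scoped MatrixOrder ComplexOrder

namespace Matrix

variable {m : Type*} [Fintype m]

lemma IsHermitian.dotProduct_mul_add_mul_mulVec {D : Matrix m m ℝ} (hD : D.IsHermitian)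
    {t : ℝ} {v : m → ℝ} (hv : D *ᵥ v = t • v) (M N : Matrix m m ℝ) :
    v ⬝ᵥ (M * D + D * N) *ᵥ v = t * (v ⬝ᵥ M *ᵥ v + v ⬝ᵥ N *ᵥ v) := by
  have hvD : v ᵥ* D = t • v := by
    rw [← hv, ← vecMul_transpose, ← conjTranspose_eq_transpose_of_trivial, hD.eq]
  rw [add_mulVec, dotProduct_add, ← mulVec_mulVec, hv, mulVec_smul, dotProduct_smul,
    dotProduct_mulVec v (D * N), ← vecMul_vecMul, hvD, smul_vecMul, smul_dotProduct,
    ← dotProduct_mulVec, smul_eq_mul, smul_eq_mul, mul_add]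

variable [DecidableEq m]

lemma PosSemidef.sqrt_eq_cfcSqrt {𝕜 : Type*} [RCLike 𝕜] {A : Matrix m m 𝕜}
    (hA : A.PosSemidef) : hA.sqrt = CFC.sqrt A := by
  rw [CFC.sqrt_eq_cfc, cfc_nnreal_eq_real _ A, hA.1.cfc_eq]
  simp only [IsHermitian.cfc, PosSemidef.sqrt, Unitary.conjStarAlgAut_apply]
  congr 3
  funext i
  simp [max_eq_left (hA.eigenvalues_nonneg i)]

lemma PosSemidef.trace_mul_nonneg {X A : Matrix m m ℝ} (hX : X.PosSemidef) (hA : A.PosSemidef) :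
    0 ≤ (X * A).trace := by
  have hS : (CFC.sqrt A)ᴴ = CFC.sqrt A := (CFC.sqrt_nonneg A).isSelfAdjoint
  rw [← CFC.sqrt_mul_sqrt_self A hA.nonneg, ← mul_assoc, trace_mul_cycle]
  nth_rw 1 [← hS]
  exact (hX.conjTranspose_mul_mul_same _).trace_nonneg

lemma PosSemidef.sub_of_mul_self_sub {S T : Matrix m m ℝ} (hS : S.PosSemidef)
    (hT : T.PosSemidef) (h : (S * S - T * T).PosSemidef) : (S - T).PosSemidef := by
  have hD : (S - T).IsHermitian := hS.1.sub hT.1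
  refine hD.posSemidef_iff_eigenvalues_nonneg.mpr fun i => ?_
  set t := hD.eigenvalues i
  set v : m → ℝ := ⇑(hD.eigenvectorBasis i)
  have hv : (S - T) *ᵥ v = t • v := hD.mulVec_eigenvectorBasis i
  have hv0 : v ≠ 0 := fun h0 =>
    hD.eigenvectorBasis.orthonormal.ne_zero i (by ext k; exact congrFun h0 k)
  have key := hD.dotProduct_mul_add_mul_mulVec hv S T
  rw [show S * (S - T) + (S - T) * T = S * S - T * T by noncomm_ring] at key
  by_contra! ht
  simp only [Pi.zero_apply] at ht
  have quad_nonneg {M : Matrix m m ℝ} (hM : M.PosSemidef) : 0 ≤ v ⬝ᵥ M *ᵥ v := by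
    simpa using hM.dotProduct_mulVec_nonneg v
  have hSv : S *ᵥ v = 0 := (hS.dotProduct_mulVec_zero_iff v).mp <| by
    simp only [star_trivial]; nlinarith [quad_nonneg h, quad_nonneg hS, quad_nonneg hT]
  have hTv : T *ᵥ v = 0 := (hT.dotProduct_mulVec_zero_iff v).mp <| by
    simp only [star_trivial]; nlinarith [quad_nonneg h, quad_nonneg hS, quad_nonneg hT]
  have htv : t • v = 0 := by rw [← hv, sub_mulVec, hSv, hTv, sub_zero]
  exact hv0 ((smul_eq_zero.mp htv).resolve_left ht.ne)

theorem cfcSqrt_le_cfcSqrt {A B : Matrix m m ℝ} (hA : 0 ≤ A) (hAB : A ≤ B) :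
    CFC.sqrt A ≤ CFC.sqrt B := by
  refine le_iff.mpr ((CFC.sqrt_nonneg B).posSemidef.sub_of_mul_self_sub
    (CFC.sqrt_nonneg A).posSemidef ?_)
  rw [CFC.sqrt_mul_sqrt_self B (hA.trans hAB), CFC.sqrt_mul_sqrt_self A]
  exact le_iff.mp hAB

/- The L2 operator norm induces the usual (entrywise) topology, and the functional calculus is
isometric for it. -/
theorem continuousOn_cfcSqrt :
    ContinuousOn (CFC.sqrt : Matrix m m ℝ → Matrix m m ℝ) {A | 0 ≤ A} := by
  open scoped Matrix.Norms.L2Operator in exact CFC.continuousOn_sqrt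

section TraceWeighted

variable {A : Matrix m m ℝ}

lemma PosSemidef.trace_mul_smul (hA : A.PosSemidef) {X : Matrix m m ℝ} (hX : X.PosSemidef) :
    ((X * A).trace • X).PosSemidef :=
  hX.smul (hX.trace_mul_nonneg hA)

lemma continuousOn_cfcSqrt_trace_mul_smul (hA : A.PosSemidef) :
    ContinuousOn (fun X => CFC.sqrt ((X * A).trace • X)) {X | X.PosSemidef} :=
  continuousOn_cfcSqrt.comp (by fun_prop) fun _ hX => (hA.trace_mul_smul hX).nonneg

lemma cfcSqrt_trace_mul_smul_smul (hA : A.PosSemidef) {X : Matrix m m ℝ} (hX : X.PosSemidef)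
    {a : ℝ} (ha : 0 ≤ a) :
    CFC.sqrt ((a • X * A).trace • a • X) = a • CFC.sqrt ((X * A).trace • X) := by
  have hXA := hA.trace_mul_smul hX
  rw [CFC.sqrt_eq_iff _ _ (hA.trace_mul_smul (hX.smul ha)).nonneg
    (smul_nonneg ha (CFC.sqrt_nonneg _)), smul_mul_smul_comm, CFC.sqrt_mul_sqrt_self _ hXA.nonneg,
    smul_mul, trace_smul, smul_smul, smul_smul, smul_eq_mul]
  ring_nf

lemma cfcSqrt_trace_mul_smul_mono (hA : A.PosSemidef) {X Y : Matrix m m ℝ} (hX : X.PosSemidef)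
    (hXY : X ≤ Y) : CFC.sqrt ((X * A).trace • X) ≤ CFC.sqrt ((Y * A).trace • Y) := by
  have hY : Y.PosSemidef := (hX.nonneg.trans hXY).posSemidef
  have hYX : (Y - X).PosSemidef := le_iff.mp hXY
  have hsplit : (Y * A).trace • Y - (X * A).trace • X =
      (X * A).trace • (Y - X) + ((Y - X) * A).trace • Y := by
    rw [sub_mul, trace_sub, sub_smul, smul_sub]; abel
  refine cfcSqrt_le_cfcSqrt (hA.trace_mul_smul hX).nonneg (le_iff.mpr ?_)
  rw [hsplit]
  exact (hYX.smul (hX.trace_mul_nonneg hA)).add (hY.smul (hYX.trace_mul_nonneg hA))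

end TraceWeighted

lemma le_one_of_cfcSqrt_smul_eq {X : Matrix m m ℝ} (i : m) (hX : X.PosSemidef) (hX0 : X ≠ 0)
    {ρ : ℝ} (h : CFC.sqrt (X i i • X) = ρ • X) : ρ ≤ 1 := by
  have hsq : (ρ * ρ) • (X * X) = X i i • X := by
    rw [← smul_mul_smul_comm, ← h]
    exact CFC.sqrt_mul_sqrt_self _ (hX.smul hX.diag_nonneg).nonneg
  have hXX : (X * X) i i = ∑ j, X j i ^ 2 := by
    refine (mul_apply).trans (Finset.sum_congr rfl fun j _ => ?_)
    rw [← hX.1.apply j i, star_trivial, sq]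
  have hii : X i i ^ 2 ≤ (X * X) i i := hXX ▸
    Finset.single_le_sum (f := fun j => X j i ^ 2) (fun j _ => sq_nonneg _) (Finset.mem_univ i)
  have hentry : ρ * ρ * (X * X) i i = X i i * X i i := congrFun (congrFun hsq i) i
  by_contra! hρ1
  have hρρ : 1 < ρ * ρ := by nlinarith
  have hc : X i i = 0 := pow_eq_zero_iff two_ne_zero |>.mp <| by
    nlinarith [mul_le_mul_of_nonneg_left hii (mul_self_nonneg ρ), sq_nonneg (X i i)]
  rw [hc, zero_smul] at hsq
  have hXX0 : X * X = 0 := (smul_eq_zero.mp hsq).resolve_left (zero_lt_one.trans hρρ).ne'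
  exact hX0 (conjTranspose_mul_self_eq_zero.mp (by rwa [hX.1.eq]))

lemma cfcSqrt_sq_smul_of_mul_self_eq {P : Matrix m m ℝ} (hP : P.PosSemidef) (hPP : P * P = P)
    (c : ℝ) : CFC.sqrt (c ^ 2 • P) = |c| • P := by
  rw [CFC.sqrt_eq_iff _ _ (hP.smul (sq_nonneg c)).nonneg (hP.smul (abs_nonneg c)).nonneg,
    smul_mul_smul_comm, hPP, abs_mul_abs_self, sq]

end Matrix

section Zmat

variable {n : ℕ}

lemma trace_mul_Amat (hn : 0 < n) (X : Matrix (Fin n) (Fin n) ℝ) :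
    (X * Amat n).trace = X ⟨0, hn⟩ ⟨0, hn⟩ := by
  rw [Amat, trace, Finset.sum_eq_single ⟨0, hn⟩]
  · simp
  · intro b _ hb
    simp [mul_diagonal, Fin.ext_iff.not.mp hb]
  · simp

lemma posSemidef_Amat : (Amat n).PosSemidef :=
  PosSemidef.diagonal fun i => by dsimp only; split_ifs <;> norm_num

def cosSinVec (n : ℕ) (θ : ℝ) : Fin n → ℝ := fun j =>
  if (j : ℕ) = 0 then Real.cos θ else if (j : ℕ) = 1 then Real.sin θ else 0

lemma Zmat_eq_vecMulVec (θ : ℝ) : Zmat n θ = vecMulVec (cosSinVec n θ) (cosSinVec n θ) := by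
  ext i j
  simp only [Zmat, cosSinVec, vecMulVec_apply]
  split_ifs <;> first | omega | ring

lemma cosSinVec_dotProduct_self (hn : 2 ≤ n) (θ : ℝ) : cosSinVec n θ ⬝ᵥ cosSinVec n θ = 1 := by
  obtain ⟨k, rfl⟩ : ∃ k, n = k + 2 := ⟨n - 2, by omega⟩
  simp [dotProduct, Fin.sum_univ_succ, cosSinVec, ← sq]

lemma posSemidef_Zmat (θ : ℝ) : (Zmat n θ).PosSemidef := by
  simpa [Zmat_eq_vecMulVec] using posSemidef_vecMulVec_self_star (cosSinVec n θ)

lemma Zmat_mul_self (hn : 2 ≤ n) (θ : ℝ) : Zmat n θ * Zmat n θ = Zmat n θ := by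
  rw [Zmat_eq_vecMulVec, vecMulVec_mul_vecMulVec, cosSinVec_dotProduct_self hn, one_smul]

lemma Zmat_ne_zero (hn : 2 ≤ n) (θ : ℝ) : Zmat n θ ≠ 0 := fun h => by
  simpa [Zmat_eq_vecMulVec, trace_vecMulVec, cosSinVec_dotProduct_self hn] using
    congrArg trace h

end Zmat

/-- Let `n ≥ 2` and let `f` be the map on the cone of positive semidefinite symmetric
real `n × n` matrices given by `f(X) = (tr(XA)·X)^{1/2}` (the positive semidefinite
square root), where `A = diag(1, 0, …, 0)`. Then `f` is a continuous order-preserving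
homogeneous map of the cone into itself, its cone spectrum equals `[0,1]`
(in particular `f(Z_θ) = |cos θ| Z_θ` for `0 ≤ θ ≤ 2π`), and no `ρ > 1` is an
eigenvalue of `f` on the nonzero positive semidefinite matrices. -/
theorem posSemidef_sqrt_spectrum
    (n : ℕ) (hn : 2 ≤ n)
    (f : Matrix (Fin n) (Fin n) ℝ → Matrix (Fin n) (Fin n) ℝ)
    (hf : ∀ X : Matrix (Fin n) (Fin n) ℝ,
      ∀ h : (((X * Amat n).trace) • X).PosSemidef, f X = h.sqrt) :
    Set.MapsTo f {X | X.PosSemidef} {X | X.PosSemidef} ∧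
      ContinuousOn f {X | X.PosSemidef} ∧
      (∀ a : ℝ, 0 ≤ a → ∀ X : Matrix (Fin n) (Fin n) ℝ, X.PosSemidef →
        f (a • X) = a • f X) ∧
      (∀ X Y : Matrix (Fin n) (Fin n) ℝ, X.PosSemidef → Y.PosSemidef →
        (Y - X).PosSemidef → (f Y - f X).PosSemidef) ∧
      {ρ : ℝ | 0 ≤ ρ ∧ ∃ X : Matrix (Fin n) (Fin n) ℝ,
        X.PosSemidef ∧ X ≠ 0 ∧ f X = ρ • X} = Set.Icc 0 1 ∧
      (∀ θ : ℝ, 0 ≤ θ → θ ≤ 2 * Real.pi →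
        f (Zmat n θ) = |Real.cos θ| • Zmat n θ) ∧
      (∀ ρ : ℝ, 1 < ρ → ¬∃ X : Matrix (Fin n) (Fin n) ℝ,
        X.PosSemidef ∧ X ≠ 0 ∧ f X = ρ • X) := by
  have hA := posSemidef_Amat (n := n)
  have hf' (X : Matrix (Fin n) (Fin n) ℝ) (hX : X.PosSemidef) :
      f X = CFC.sqrt ((X * Amat n).trace • X) :=
    (hf X (hA.trace_mul_smul hX)).trans (PosSemidef.sqrt_eq_cfcSqrt _)
  have hZ (θ : ℝ) : f (Zmat n θ) = |Real.cos θ| • Zmat n θ := by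
    rw [hf' _ (posSemidef_Zmat θ), trace_mul_Amat (by omega)]
    exact cfcSqrt_sq_smul_of_mul_self_eq (posSemidef_Zmat θ) (Zmat_mul_self hn θ) _
  have hle_one (ρ : ℝ) (X : Matrix (Fin n) (Fin n) ℝ) (hX : X.PosSemidef) (hX0 : X ≠ 0)
      (hfX : f X = ρ • X) : ρ ≤ 1 := by
    rw [hf' X hX, trace_mul_Amat (by omega)] at hfX
    exact le_one_of_cfcSqrt_smul_eq _ hX hX0 hfX
  refine ⟨fun X hX => ?_, (continuousOn_cfcSqrt_trace_mul_smul hA).congr hf', ?_, ?_, ?_,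
    fun θ _ _ => hZ θ, fun ρ hρ ⟨X, hX, hX0, hfX⟩ => hρ.not_ge (hle_one ρ X hX hX0 hfX)⟩
  · show (f X).PosSemidef
    rw [hf' X hX]
    exact (CFC.sqrt_nonneg _).posSemidef
  · intro a ha X hX
    rw [hf' _ (hX.smul ha), hf' X hX, cfcSqrt_trace_mul_smul_smul hA hX ha]
  · intro X Y hX hY hXY
    rw [hf' X hX, hf' Y hY]
    exact le_iff.mp (cfcSqrt_trace_mul_smul_mono hA hX (le_iff.mpr hXY))
  · ext ρ
    refine ⟨fun ⟨hρ, X, hX, hX0, hfX⟩ => ⟨hρ, hle_one ρ X hX hX0 hfX⟩, fun ⟨hρ0, hρ1⟩ => ?_⟩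
    refine ⟨hρ0, Zmat n (Real.arccos ρ), posSemidef_Zmat _, Zmat_ne_zero hn _, ?_⟩
    rw [hZ, Real.cos_arccos (by linarith) hρ1, abs_of_nonneg hρ0]
end
end
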